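/- arXiv:1103.5094 — 11 statements merged into one kernel-verified Lean document; each statement's English description precedes it below -/
import Mathlib

section
/- Let Y be a non-zero Banach space and S ⊆ Y a universal differentiability set. Then the Hausdorff dimension of S is at least 1. -/
/-!
Pick a continuous functional `φ` on `Y` with `φ e = 1`. Lipschitz maps do not raise Hausdorff
dimension, so if `dimH S < 1` then `φ '' S` is Lebesgue-null. For a null set `A ⊆ ℝ` choose
nested open sets `G k ⊇ A` such that `G (k + 1)` fills at most a fraction `c` of every collar
`{y | infEDist y (G k)ᶜ < u}`, and let `E` be the union of the layers `G (2i) \ G (2i+1)`.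
Then `g x = |E ∩ (-∞, x]|` is `1`-Lipschitz, and at `x ∈ A`, with `t = infDist x (G k)ᶜ`,
the slope of `g` over `(x, x + t / 2]` is `≤ 4c` for odd `k` and `≥ 1 - 4c` for even `k`;
since `t → 0`, `g` is differentiable at no point of `A`. Finally `g ∘ φ` is Lipschitz, and
differentiability of `g ∘ φ` at `y ∈ S` gives that of `g` at `φ y` along the line `y + ℝ e`.
-/

open Metric Set MeasureTheory Filter Topology
open scoped ENNReal NNReal

section

variable {X : Type*}

def SparseNearCompl [PseudoEMetricSpace X] [MeasurableSpace X] (μ : Measure X) (c : ℝ≥0)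
    (G' G : Set X) : Prop :=
  ∀ u : ℝ≥0∞, μ (G' ∩ {y | infEDist y Gᶜ < u}) ≤ c * u

theorem exists_isOpen_subset_sparseNearCompl [PseudoEMetricSpace X] [MeasurableSpace X]
    (μ : Measure X) [μ.OuterRegular] {A G : Set X} (hA : μ A = 0) (hG : IsOpen G) (hAG : A ⊆ G)
    {c : ℝ≥0} (hc : c ≠ 0) :
    ∃ G' ⊆ G, IsOpen G' ∧ A ⊆ G' ∧ SparseNearCompl μ c G' G := by
  -- The points of `A` at distance `> 2⁻¹ ^ n` from `Gᶜ` are covered by an open set of measure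
  -- `< c * 2⁻¹ ^ (n + 1)` kept at that distance, so only the pieces with `2⁻¹ ^ n < u` meet
  -- the collar of width `u`, and their measures sum to at most `c * u`.
  have hW (n : ℕ) : ∃ W ⊇ A ∩ {y | 2⁻¹ ^ n < infEDist y Gᶜ}, IsOpen W ∧
      μ W < c * 2⁻¹ ^ (n + 1) :=
    Set.exists_isOpen_lt_of_lt _ _ <| (measure_mono_null inter_subset_left hA).trans_lt <|
      ENNReal.mul_pos (by exact_mod_cast hc) (by simp)
  choose W hAW hWo hWμ using hW
  set V : ℕ → Set X := fun n => W n ∩ {y | 2⁻¹ ^ n < infEDist y Gᶜ}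
  refine ⟨⋃ n, V n, iUnion_subset fun n y hy => ?_,
    isOpen_iUnion fun n => (hWo n).inter (isOpen_lt continuous_const continuous_infEDist),
    fun y hy => ?_, fun u => ?_⟩
  · by_contra hyG
    simpa [infEDist_zero_of_mem (mem_compl hyG)] using hy.2
  · have hpos : infEDist y Gᶜ ≠ 0 := by
      rw [← pos_iff_ne_zero, infEDist_pos_iff_notMem_closure, hG.isClosed_compl.closure_eq]
      exact not_not.2 (hAG hy)
    obtain ⟨n, hn⟩ := ENNReal.exists_inv_two_pow_lt hpos
    exact mem_iUnion.2 ⟨n, hAW n ⟨hy, hn⟩, hn⟩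
  rcases eq_or_ne u 0 with rfl | hu
  · simp
  have hN := ENNReal.exists_inv_two_pow_lt hu
  set N := Nat.find hN
  have hsub : (⋃ n, V n) ∩ {y | infEDist y Gᶜ < u} ⊆ ⋃ n, V (n + N) := by
    rintro y ⟨hy, hyu⟩
    obtain ⟨n, hyn⟩ := mem_iUnion.1 hy
    have hNn : N ≤ n := Nat.find_min' hN (hyn.2.trans hyu)
    exact mem_iUnion.2 ⟨n - N, by rwa [Nat.sub_add_cancel hNn]⟩
  calc μ ((⋃ n, V n) ∩ {y | infEDist y Gᶜ < u})
      ≤ ∑' n, μ (V (n + N)) := (measure_mono hsub).trans (measure_iUnion_le _)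
    _ ≤ ∑' n, (c : ℝ≥0∞) * 2⁻¹ ^ N * 2⁻¹ ^ (n + 1) := ENNReal.tsum_le_tsum fun n =>
        (measure_mono inter_subset_left).trans <| (hWμ _).le.trans_eq <| by ring
    _ = c * 2⁻¹ ^ N := by
        rw [ENNReal.tsum_mul_left, ENNReal.tsum_geometric_add_one, ENNReal.one_sub_inv_two,
          inv_inv, ENNReal.inv_mul_cancel (by norm_num) (by norm_num), mul_one]
    _ ≤ c * u := by gcongr; exact (Nat.find_spec hN).le

theorem exists_antitone_sparseNearCompl [PseudoEMetricSpace X] [MeasurableSpace X]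
    (μ : Measure X) [μ.OuterRegular] {A U : Set X} (hA : μ A = 0) (hU : IsOpen U) (hAU : A ⊆ U)
    {c : ℝ≥0} (hc : c ≠ 0) :
    ∃ G : ℕ → Set X, G 0 = U ∧ Antitone G ∧ (∀ k, IsOpen (G k)) ∧ (∀ k, A ⊆ G k) ∧
      ∀ k, SparseNearCompl μ c (G (k + 1)) (G k) := by
  have step (G : {G : Set X // IsOpen G ∧ A ⊆ G}) :
      ∃ G' : {G' : Set X // IsOpen G' ∧ A ⊆ G'}, G'.1 ⊆ G.1 ∧ SparseNearCompl μ c G'.1 G.1 := by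
    obtain ⟨G', hG'G, hG', hAG', hs⟩ :=
      exists_isOpen_subset_sparseNearCompl μ hA G.2.1 G.2.2 hc
    exact ⟨⟨G', hG', hAG'⟩, hG'G, hs⟩
  choose next hnext_sub hnext_sparse using step
  let G (k : ℕ) : {G : Set X // IsOpen G ∧ A ⊆ G} := next^[k] ⟨U, hU, hAU⟩
  have hG (k : ℕ) : G (k + 1) = next (G k) := Function.iterate_succ_apply' _ _ _
  refine ⟨fun k => (G k).1, rfl, antitone_nat_of_succ_le fun k => ?_, fun k => (G k).2.1,
    fun k => (G k).2.2, fun k => ?_⟩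
  · rw [hG]; exact hnext_sub _
  · simp only [hG]; exact hnext_sparse _

theorem SparseNearCompl.measure_inter_ball_le [PseudoMetricSpace X] [MeasurableSpace X]
    {μ : Measure X} {c : ℝ≥0} {G' G : Set X} (h : SparseNearCompl μ c G' G) (hG : Gᶜ.Nonempty)
    (x : X) : μ (G' ∩ ball x (infDist x Gᶜ)) ≤ c * ENNReal.ofReal (2 * infDist x Gᶜ) := by
  have hx : infEDist x Gᶜ = ENNReal.ofReal (infDist x Gᶜ) :=
    (ENNReal.ofReal_toReal (infEDist_ne_top hG)).symm
  refine (measure_mono (inter_subset_inter_right _ fun y (hy : dist y x < _) => ?_)).trans (h _)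
  calc infEDist y Gᶜ ≤ infEDist x Gᶜ + edist y x := infEDist_le_infEDist_add_edist
    _ < ENNReal.ofReal (infDist x Gᶜ) + ENNReal.ofReal (infDist x Gᶜ) := by
        rw [hx]
        exact ENNReal.add_lt_add_left ENNReal.ofReal_ne_top (edist_lt_ofReal.2 hy)
    _ = ENNReal.ofReal (2 * infDist x Gᶜ) := by
        rw [← ENNReal.ofReal_add infDist_nonneg infDist_nonneg, two_mul]

end

section

variable {α : Type*}

def evenLayers (G : ℕ → Set α) : Set α :=
  ⋃ i, G (2 * i) \ G (2 * i + 1)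

theorem evenLayers_subset {G : ℕ → Set α} (hG : Antitone G) :
    evenLayers G ⊆ G 0 :=
  iUnion_subset fun _ => sdiff_subset.trans (hG (Nat.zero_le _))

theorem diff_subset_evenLayers (G : ℕ → Set α) (j : ℕ) :
    G (2 * j) \ G (2 * j + 1) ⊆ evenLayers G :=
  subset_iUnion_of_subset j subset_rfl

theorem evenLayers_inter_subset {G : ℕ → Set α} (hG : Antitone G) (j : ℕ) :
    evenLayers G ∩ G (2 * j + 1) ⊆ G (2 * j + 2) := by
  rintro y ⟨hy, hyj⟩
  obtain ⟨i, hyi, hyi'⟩ := mem_iUnion.1 hy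
  have hji : j < i := by
    by_contra! hij
    exact hyi' (hG (by omega) hyj)
  exact hG (by omega) hyi

end

theorem measureReal_inter_Iic_sub {μ : Measure ℝ} {E : Set ℝ} (hE : μ E ≠ ∞) {x y : ℝ}
    (hxy : x ≤ y) : μ.real (E ∩ Iic y) - μ.real (E ∩ Iic x) = μ.real (E ∩ Ioc x y) := by
  have h := measureReal_inter_add_sdiff (μ := μ) (s := E ∩ Iic y) (t := Iic x) measurableSet_Iic
    (measure_ne_top_of_subset inter_subset_left hE)
  rw [inter_assoc, Iic_inter_Iic, min_eq_right hxy, inter_sdiff_assoc] at h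
  rw [← h, Iic_sdiff_Iic]
  ring

theorem lipschitzWith_one_volume_real_inter_Iic {E : Set ℝ} (hE : volume E ≠ ∞) :
    LipschitzWith 1 fun x => volume.real (E ∩ Iic x) := by
  refine LipschitzWith.of_le_add_mul 1 fun x y => ?_
  rw [NNReal.coe_one, one_mul]
  rcases le_total x y with hxy | hyx
  · have : volume.real (E ∩ Iic x) ≤ volume.real (E ∩ Iic y) :=
      measureReal_mono (inter_subset_inter_right _ (Iic_subset_Iic.2 hxy))
        (measure_ne_top_of_subset inter_subset_left hE)
    linarith [dist_nonneg (x := x) (y := y)]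
  · have hdiff := measureReal_inter_Iic_sub hE hyx
    have : volume.real (E ∩ Ioc y x) ≤ x - y :=
      (measureReal_mono inter_subset_right measure_Ioc_lt_top.ne).trans_eq
        (Real.volume_real_Ioc_of_le hyx)
    rw [Real.dist_eq, abs_of_nonneg (by linarith)]
    linarith

theorem slope_volume_real_inter_Iic {E : Set ℝ} (hE : volume E ≠ ∞) (x : ℝ) {r : ℝ}
    (hr : 0 < r) :
    slope (fun y => volume.real (E ∩ Iic y)) x (x + r) = volume.real (E ∩ Ioc x (x + r)) / r := by
  rw [slope_def_field, measureReal_inter_Iic_sub hE (by linarith), add_sub_cancel_left]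

theorem not_differentiableAt_of_frequently_slope {f : ℝ → ℝ} {x a b : ℝ} (hab : a < b)
    (ha : ∃ᶠ y in 𝓝[>] x, slope f x y ≤ a) (hb : ∃ᶠ y in 𝓝[>] x, b ≤ slope f x y) :
    ¬DifferentiableAt ℝ f x := by
  intro hf
  have h := (hasDerivWithinAt_iff_tendsto_slope' self_notMem_Ioi).1
    hf.hasDerivAt.hasDerivWithinAt
  have h₁ : deriv f x ≤ a := isClosed_Iic.mem_of_frequently_of_tendsto ha h
  have h₂ : b ≤ deriv f x := isClosed_Ici.mem_of_frequently_of_tendsto hb h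
  linarith

theorem frequently_nhdsGT_of_tendsto {x : ℝ} {r : ℕ → ℝ} (hr : Tendsto r atTop (𝓝 0))
    (hr₀ : ∀ n, 0 < r n) {p : ℝ → Prop} (hp : ∃ᶠ n in atTop, p (x + r n)) :
    ∃ᶠ y in 𝓝[>] x, p y := by
  refine Tendsto.frequently ?_ hp
  refine tendsto_nhdsWithin_iff.2 ⟨?_, Eventually.of_forall fun n => ?_⟩
  · simpa using tendsto_const_nhds.add hr
  · simpa using hr₀ n

theorem Ioc_add_half_subset_ball {x t : ℝ} : Ioc x (x + t / 2) ⊆ ball x t := by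
  rw [Real.ball_eq_Ioo]
  exact fun y ⟨h₁, h₂⟩ => ⟨by linarith, by linarith⟩

namespace SparseNearCompl

variable {c : ℝ≥0} {G' G : Set ℝ}

theorem volume_real_inter_Ioc_le (h : SparseNearCompl volume c G' G) (hG : Gᶜ.Nonempty)
    (x : ℝ) : volume.real (G' ∩ Ioc x (x + infDist x Gᶜ / 2)) ≤ 4 * c * (infDist x Gᶜ / 2) :=
  calc volume.real (G' ∩ Ioc x (x + infDist x Gᶜ / 2))
      ≤ volume.real (G' ∩ ball x (infDist x Gᶜ)) :=
        measureReal_mono (inter_subset_inter_right _ Ioc_add_half_subset_ball)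
          (measure_ne_top_of_subset inter_subset_right measure_ball_lt_top.ne)
    _ ≤ c * (2 * infDist x Gᶜ) := by
        refine ENNReal.toReal_le_of_le_ofReal
          (mul_nonneg c.coe_nonneg (mul_nonneg zero_le_two infDist_nonneg)) ?_
        rw [ENNReal.ofReal_mul c.coe_nonneg, ENNReal.ofReal_coe_nnreal]
        exact h.measure_inter_ball_le hG x
    _ = 4 * c * (infDist x Gᶜ / 2) := by ring

theorem slope_le {E : Set ℝ} (h : SparseNearCompl volume c G' G) (hG : Gᶜ.Nonempty)
    (hE : volume E ≠ ∞) (hEG : E ∩ G ⊆ G') {x : ℝ} (hx : 0 < infDist x Gᶜ) :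
    slope (fun y => volume.real (E ∩ Iic y)) x (x + infDist x Gᶜ / 2) ≤ 4 * c := by
  have hIoc : Ioc x (x + infDist x Gᶜ / 2) ⊆ G :=
    Ioc_add_half_subset_ball.trans ball_infDist_compl_subset
  rw [slope_volume_real_inter_Iic hE x (half_pos hx), div_le_iff₀ (half_pos hx)]
  calc volume.real (E ∩ Ioc x (x + infDist x Gᶜ / 2))
      ≤ volume.real (G' ∩ Ioc x (x + infDist x Gᶜ / 2)) :=
        measureReal_mono (fun y hy => ⟨hEG ⟨hy.1, hIoc hy.2⟩, hy.2⟩)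
          (measure_ne_top_of_subset inter_subset_right measure_Ioc_lt_top.ne)
    _ ≤ 4 * c * (infDist x Gᶜ / 2) := h.volume_real_inter_Ioc_le hG x

theorem le_slope {E : Set ℝ} (h : SparseNearCompl volume c G' G) (hG : Gᶜ.Nonempty)
    (hE : volume E ≠ ∞) (hGE : G \ G' ⊆ E) {x : ℝ} (hx : 0 < infDist x Gᶜ) :
    1 - 4 * c ≤ slope (fun y => volume.real (E ∩ Iic y)) x (x + infDist x Gᶜ / 2) := by
  set I := Ioc x (x + infDist x Gᶜ / 2)
  have hIoc : I ⊆ G := Ioc_add_half_subset_ball.trans ball_infDist_compl_subset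
  have hsplit : I ⊆ (E ∩ I) ∪ (G' ∩ I) := fun y hy => by
    by_cases hy' : y ∈ G'
    · exact Or.inr ⟨hy', hy⟩
    · exact Or.inl ⟨hGE ⟨hIoc hy, hy'⟩, hy⟩
  have hI : volume.real I ≤ volume.real (E ∩ I) + volume.real (G' ∩ I) :=
    (measureReal_mono hsplit (measure_union_lt_top
      (measure_lt_top_of_subset inter_subset_right measure_Ioc_lt_top.ne)
      (measure_lt_top_of_subset inter_subset_right measure_Ioc_lt_top.ne)).ne).trans
      (measureReal_union_le _ _)
  rw [Real.volume_real_Ioc_of_le (by linarith)] at hI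
  rw [slope_volume_real_inter_Iic hE x (half_pos hx), le_div_iff₀ (half_pos hx)]
  linarith [h.volume_real_inter_Ioc_le hG x]

theorem infDist_compl_le (h : SparseNearCompl volume c G' G) (hG'G : G' ⊆ G)
    (hG : Gᶜ.Nonempty) (x : ℝ) : infDist x G'ᶜ ≤ c * infDist x Gᶜ := by
  have hball : ball x (infDist x G'ᶜ) ⊆ G' ∩ ball x (infDist x Gᶜ) :=
    subset_inter ball_infDist_compl_subset
      (ball_subset_ball (infDist_le_infDist_of_subset (compl_subset_compl.2 hG'G) hG))
  have := (measure_mono hball).trans (h.measure_inter_ball_le hG x)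
  rw [Real.volume_ball, ← ENNReal.ofReal_coe_nnreal, ← ENNReal.ofReal_mul c.coe_nonneg,
    ENNReal.ofReal_le_ofReal_iff
      (mul_nonneg c.coe_nonneg (mul_nonneg zero_le_two infDist_nonneg))] at this
  linarith

end SparseNearCompl

theorem tendsto_infDist_compl_of_sparseNearCompl {c : ℝ≥0} (hc : c < 1) {G : ℕ → Set ℝ}
    (hG : Antitone G) (hGc : ∀ k, (G k)ᶜ.Nonempty)
    (hs : ∀ k, SparseNearCompl volume c (G (k + 1)) (G k)) (x : ℝ) :
    Tendsto (fun k => infDist x (G k)ᶜ) atTop (𝓝 0) := by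
  refine squeeze_zero (g := fun k => (c : ℝ) ^ k * infDist x (G 0)ᶜ) (fun _ => infDist_nonneg)
    (fun k => le_geom (u := fun k => infDist x (G k)ᶜ) c.coe_nonneg k fun m _ =>
      (hs m).infDist_compl_le (hG m.le_succ) (hGc m) x) ?_
  simpa using (tendsto_pow_atTop_nhds_zero_of_lt_one c.coe_nonneg hc).mul_const
    (infDist x (G 0)ᶜ)

theorem exists_lipschitzWith_forall_not_differentiableAt {A : Set ℝ} (hA : volume A = 0) :
    ∃ g : ℝ → ℝ, LipschitzWith 1 g ∧ ∀ x ∈ A, ¬DifferentiableAt ℝ g x := by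
  obtain ⟨U, hAU, hU, hU_lt⟩ := A.exists_isOpen_lt_of_lt 1 (hA ▸ one_pos)
  obtain ⟨G, rfl, hanti, hopen, hAG, hs⟩ :=
    exists_antitone_sparseNearCompl volume hA hU hAU (c := 16⁻¹) (by norm_num)
  have hfin (k : ℕ) : volume (G k) ≠ ∞ :=
    ((measure_mono (hanti k.zero_le)).trans_lt (hU_lt.trans ENNReal.one_lt_top)).ne
  have hGc (k : ℕ) : (G k)ᶜ.Nonempty := nonempty_compl.2 fun h => hfin k (by simp [h])
  have hE : volume (evenLayers G) ≠ ∞ :=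
    measure_ne_top_of_subset (evenLayers_subset hanti) (hfin 0)
  refine ⟨_, lipschitzWith_one_volume_real_inter_Iic hE, fun x hx => ?_⟩
  have ht (k : ℕ) : 0 < infDist x (G k)ᶜ :=
    ((hopen k).isClosed_compl.notMem_iff_infDist_pos (hGc k)).1 (not_not.2 (hAG k hx))
  have htend : Tendsto (fun k => infDist x (G k)ᶜ / 2) atTop (𝓝 0) := by
    simpa using
      (tendsto_infDist_compl_of_sparseNearCompl (by norm_num) hanti hGc hs x).div_const 2
  refine not_differentiableAt_of_frequently_slope (a := 4 * (16⁻¹ : ℝ≥0))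
    (b := 1 - 4 * (16⁻¹ : ℝ≥0)) (by norm_num) ?_ ?_
  · refine frequently_nhdsGT_of_tendsto htend (fun k => half_pos (ht k)) <|
      frequently_atTop.2 fun k => ⟨2 * k + 1, by omega, ?_⟩
    exact (hs _).slope_le (hGc _) hE (evenLayers_inter_subset hanti k) (ht _)
  · refine frequently_nhdsGT_of_tendsto htend (fun k => half_pos (ht k)) <|
      frequently_atTop.2 fun k => ⟨2 * k, by omega, ?_⟩
    exact (hs _).le_slope (hGc _) hE (diff_subset_evenLayers G k) (ht _)

theorem DifferentiableAt.of_comp_of_map_eq_one {𝕜 E F : Type*} [NontriviallyNormedField 𝕜]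
    [NormedAddCommGroup E] [NormedSpace 𝕜 E] [NormedAddCommGroup F] [NormedSpace 𝕜 F]
    {φ : E →L[𝕜] 𝕜} {e : E} (he : φ e = 1) {g : 𝕜 → F} {y : E}
    (h : DifferentiableAt 𝕜 (g ∘ φ) y) : DifferentiableAt 𝕜 g (φ y) := by
  have hg : (g ∘ φ) ∘ (fun t => y + (t - φ y) • e) = g := funext fun t => by simp [he]
  have hψ : DifferentiableAt 𝕜 (fun t => y + (t - φ y) • e) (φ y) := by fun_prop
  rw [← hg]
  exact DifferentiableAt.comp (φ y) (by simpa using h) hψ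

theorem statement2_general (Y : Type*) [NormedAddCommGroup Y] [NormedSpace ℝ Y]
    [Nontrivial Y] (S : Set Y)
    (hS : ∀ f : Y → ℝ, (∃ K : NNReal, LipschitzWith K f) →
      ∃ y ∈ S, DifferentiableAt ℝ f y) :
    1 ≤ dimH S := by
  by_contra! hdim
  obtain ⟨e, he⟩ := exists_ne (0 : Y)
  obtain ⟨φ, hφ⟩ := SeparatingDual.exists_eq_one (R := ℝ) he
  have hnull : volume (φ '' S) = 0 :=
    measure_zero_of_dimH_lt (d := 1) (by rw [NNReal.coe_one, hausdorffMeasure_real])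
      ((φ.lipschitz.dimH_image_le S).trans_lt (by simpa using hdim))
  obtain ⟨g, hg, hg_nd⟩ := exists_lipschitzWith_forall_not_differentiableAt hnull
  obtain ⟨y, hyS, hy⟩ := hS (g ∘ φ) ⟨_, hg.comp φ.lipschitz⟩
  exact hg_nd _ (mem_image_of_mem φ hyS) (hy.of_comp_of_map_eq_one hφ)

/-- Let `Y` be a non-zero Banach space and `S ⊆ Y` a universal
differentiability set. Then the Hausdorff dimension of `S` is at least `1`. -/
theorem statement2 (Y : Type*) [NormedAddCommGroup Y] [NormedSpace ℝ Y]
    [CompleteSpace Y] [Nontrivial Y] (S : Set Y)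
    (hS : ∀ f : Y → ℝ, (∃ K : NNReal, LipschitzWith K f) →
      ∃ y ∈ S, DifferentiableAt ℝ f y) :
    1 ≤ dimH S :=
  statement2_general Y S hS
end

section
/- Let (Y,‖·‖) be an infinite dimensional Banach space, ρ > 0, and let (K_r)_{r∈R} be a family of non-empty compact subsets of Y indexed by a separable metric space (R,γ) with the property that for every r ∈ R and x ∈ Y there is s ∈ R with K_s = x + K_r and γ(s,r) ≤ ‖x‖/(4ρ). Then for every ε > 0 there exists R(ε) ⊆ R such that: (1) for all r ∈ R there exists s ∈ R(ε) with γ(s,r) < ε; and (2) if r, s are distinct elements of R(ε) then dist(K_r,K_s) > ρε, where dist(K,K') = inf{‖k' − k‖ : k ∈ K, k' ∈ K'}. -/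
open Metric Set

/-- Separated `ε`-dense families of compacts in an infinite dimensional
Banach space (Lemma 3.5 of the paper). -/
theorem statement7 {Y R : Type*} [NormedAddCommGroup Y] [NormedSpace ℝ Y] [CompleteSpace Y]
    (hinf : ¬ FiniteDimensional ℝ Y)
    [MetricSpace R] [TopologicalSpace.SeparableSpace R]
    (ρ : ℝ) (hρ : 0 < ρ)
    (K : R → Set Y) (hKne : ∀ r, (K r).Nonempty) (hKcpt : ∀ r, IsCompact (K r))
    (htrans : ∀ (r : R) (x : Y), ∃ s : R,
      K s = (fun k => x + k) '' K r ∧ dist s r ≤ ‖x‖ / (4 * ρ)) :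
    ∀ ε > (0:ℝ), ∃ Rε : Set R,
      (∀ r : R, ∃ s ∈ Rε, dist s r < ε) ∧
      (∀ r ∈ Rε, ∀ s ∈ Rε, r ≠ s → ∀ k ∈ K r, ∀ k' ∈ K s, ρ * ε < ‖k' - k‖) := by
  classical
  intro ε hε
  by_cases hR : Nonempty R
  case neg =>
    exact ⟨∅, fun r => (hR ⟨r⟩).elim, fun r hr => hr.elim⟩
  have hρε : (0:ℝ) < ρ * ε := mul_pos hρ hε
  -- a point far from any compact set, within a controlled ball
  have sep : ∀ S : Set Y, IsCompact S →
      ∃ x : Y, ‖x‖ ≤ 7/2 * (ρ * ε) ∧ ∀ y ∈ S, ρ * ε < ‖y - x‖ := by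
    intro S hS
    obtain ⟨f, hfn, hfs⟩ := exists_seq_norm_le_one_le_norm_sub' (𝕜 := ℝ) (E := Y)
      (c := (9/8 : ℝ)) (by rw [Real.norm_eq_abs, abs_of_pos (by norm_num : (0:ℝ) < 9/8)]; norm_num)
      (R := 7/6) (by rw [Real.norm_eq_abs, abs_of_pos (by norm_num : (0:ℝ) < 9/8)]; norm_num) hinf
    set v : ℕ → Y := fun n => (3 * (ρ * ε)) • f n with hv
    have hvn : ∀ n, ‖v n‖ ≤ 7/2 * (ρ * ε) := by
      intro n
      have : ‖v n‖ = (3 * (ρ * ε)) * ‖f n‖ := by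
        rw [hv]
        rw [norm_smul, Real.norm_eq_abs, abs_of_pos (by positivity : (0:ℝ) < 3 * (ρ * ε))]
      rw [this]
      calc (3 * (ρ * ε)) * ‖f n‖ ≤ (3 * (ρ * ε)) * (7/6) :=
            mul_le_mul_of_nonneg_left (hfn n) (by positivity)
        _ = 7/2 * (ρ * ε) := by ring
    have hvs : ∀ m n, m ≠ n → 3 * (ρ * ε) ≤ ‖v m - v n‖ := by
      intro m n hmn
      have : v m - v n = (3 * (ρ * ε)) • (f m - f n) := by rw [hv]; simp [smul_sub]
      rw [this, norm_smul, Real.norm_eq_abs, abs_of_pos (by positivity : (0:ℝ) < 3 * (ρ * ε))]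
      nlinarith [hfs hmn, mul_pos hρ hε]
    by_contra h
    push_neg at h
    choose y hyS hyd using fun n => h (v n) (hvn n)
    obtain ⟨a, _, φ, hφ, hconv⟩ := hS.tendsto_subseq hyS
    obtain ⟨N, hN⟩ := (Metric.tendsto_atTop.mp hconv) ((ρ * ε)/2) (by positivity)
    have h1 := hN N le_rfl
    have h2 := hN (N+1) (Nat.le_succ N)
    simp only [Function.comp_apply] at h1 h2
    have hne : φ N ≠ φ (N+1) := fun hEq => by
      have := hφ.injective hEq; omega
    have hsep := hvs _ _ hne
    have d1 := hyd (φ N)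
    have d2 := hyd (φ (N+1))
    have : ‖v (φ N) - v (φ (N+1))‖ ≤ ‖v (φ N) - y (φ N)‖ + ‖y (φ N) - y (φ (N+1))‖
        + ‖y (φ (N+1)) - v (φ (N+1))‖ := by
      have := norm_sub_le_norm_sub_add_norm_sub (v (φ N)) (y (φ N)) (v (φ (N+1)))
      calc ‖v (φ N) - v (φ (N+1))‖ ≤ ‖v (φ N) - y (φ N)‖ + ‖y (φ N) - v (φ (N+1))‖ :=
            norm_sub_le_norm_sub_add_norm_sub _ _ _
        _ ≤ ‖v (φ N) - y (φ N)‖ + (‖y (φ N) - y (φ (N+1))‖ + ‖y (φ (N+1)) - v (φ (N+1))‖) := by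
            gcongr; exact norm_sub_le_norm_sub_add_norm_sub _ _ _
        _ = _ := by ring
    have e1 : ‖v (φ N) - y (φ N)‖ ≤ ρ * ε := by rw [norm_sub_rev]; exact d1
    have e3 : ‖y (φ (N+1)) - v (φ (N+1))‖ ≤ ρ * ε := d2
    have e2 : ‖y (φ N) - y (φ (N+1))‖ < ρ * ε := by
      have := dist_triangle (y (φ N)) a (y (φ (N+1)))
      rw [← dist_eq_norm]
      have h2' : dist a (y (φ (N+1))) < (ρ*ε)/2 := by
        rw [dist_comm]; exact h2
      linarith [h1, h2']
    linarith
  -- key step: given finitely many already-chosen indices and a target, choose a new index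
  have key : ∀ (T : Finset R) (r0 : R), ∃ s0 : R, dist s0 r0 ≤ 7/8 * ε ∧
      ∀ t ∈ T, ∀ k ∈ K s0, ∀ k' ∈ K t, ρ * ε < ‖k' - k‖ := by
    intro T r0
    set S : Set Y := ⋃ t ∈ T, (fun p : Y × Y => p.1 - p.2) '' (K t ×ˢ K r0) with hSdef
    have hS : IsCompact S := T.finite_toSet.isCompact_biUnion fun t _ =>
      (((hKcpt t).prod (hKcpt r0)).image (continuous_fst.sub continuous_snd))
    obtain ⟨x, hx1, hx2⟩ := sep S hS
    obtain ⟨s0, hs0K, hs0d⟩ := htrans r0 x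
    refine ⟨s0, ?_, ?_⟩
    · calc dist s0 r0 ≤ ‖x‖ / (4 * ρ) := hs0d
        _ ≤ (7/2 * (ρ * ε)) / (4 * ρ) := by
            apply div_le_div_of_nonneg_right hx1 (by positivity) |>.trans_eq rfl
        _ = 7/8 * ε := by field_simp; ring
    · intro t ht k hk k' hk'
      rw [hs0K] at hk
      obtain ⟨k0, hk0, rfl⟩ := hk
      have hmem : k' - k0 ∈ S := by
        rw [hSdef]
        exact mem_biUnion ht ⟨⟨k', k0⟩, ⟨hk', hk0⟩, rfl⟩
      have := hx2 _ hmem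
      have heq : k' - k0 - x = k' - (x + k0) := by abel
      rwa [heq] at this
  choose! f hf1 hf2 using key
  -- dense sequence
  obtain ⟨r, hr⟩ : ∃ r : ℕ → R, DenseRange r :=
    ⟨TopologicalSpace.denseSeq R, TopologicalSpace.denseRange_denseSeq R⟩
  -- recursive construction
  let F : ℕ → ℕ → R := fun n => Nat.rec (fun _ => Classical.arbitrary R)
    (fun n Fn => fun m => if m = n then f ((Finset.range n).image Fn) (r n) else Fn m) n
  let s : ℕ → R := fun n => F (n+1) n
  have hFsucc : ∀ n m, F (n+1) m = if m = n then f ((Finset.range n).image (F n)) (r n)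
      else F n m := fun n m => rfl
  have hF : ∀ n m, m < n → F n m = s m := by
    intro n
    induction n with
    | zero => omega
    | succ n ih =>
      intro m hm
      rw [hFsucc]
      rcases eq_or_lt_of_le (Nat.lt_succ_iff.mp hm) with hEq | hlt
      · subst hEq; rfl
      · rw [if_neg (by omega)]; exact ih m hlt
  have hs_def : ∀ n, s n = f ((Finset.range n).image (fun m => s m)) (r n) := by
    intro n
    show F (n+1) n = _
    rw [hFsucc, if_pos rfl]
    congr 1
    apply Finset.image_congr
    intro m hm
    exact hF n m (Finset.mem_range.mp hm)
  have hs_dist : ∀ n, dist (s n) (r n) ≤ 7/8 * ε := by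
    intro n; rw [hs_def]; exact hf1 _ _
  have hs_sep : ∀ m n, m < n → ∀ k ∈ K (s n), ∀ k' ∈ K (s m), ρ * ε < ‖k' - k‖ := by
    intro m n hmn k hk k' hk'
    have hmem : s m ∈ (Finset.range n).image (fun m => s m) :=
      Finset.mem_image.mpr ⟨m, Finset.mem_range.mpr hmn, rfl⟩
    have := hf2 ((Finset.range n).image (fun m => s m)) (r n) (s m) hmem
    rw [← hs_def] at this
    exact this k hk k' hk'
  refine ⟨Set.range s, ?_, ?_⟩
  · intro r'
    obtain ⟨n, hn⟩ := hr.exists_dist_lt r' (show (0:ℝ) < ε/8 by linarith)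
    rw [dist_comm] at hn
    refine ⟨s n, mem_range_self n, ?_⟩
    calc dist (s n) r' ≤ dist (s n) (r n) + dist (r n) r' := dist_triangle _ _ _
      _ < 7/8 * ε + ε/8 := by
          have := hs_dist n
          linarith
      _ = ε := by ring
  · rintro _ ⟨m, rfl⟩ _ ⟨n, rfl⟩ hne k hk k' hk'
    rcases lt_trichotomy m n with h | h | h
    · have := hs_sep m n h k' hk' k hk
      rwa [norm_sub_rev] at this
    · exact absurd (congrArg s h) hne
    · exact hs_sep n m h k hk k' hk'
end

section
/- If Y is an infinite dimensional Banach space and K ⊆ Y is compact, then for every ε > 0 there exists y ∈ Y with ‖y‖ = ε and dist(y,K) > ε/3, where dist(y,K) = inf{‖y − k‖ : k ∈ K}. -/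
open Metric Set

/-- In an infinite dimensional Banach space, for each compact `K` and
`ε > 0` there is a vector of norm `ε` whose distance to `K` exceeds `ε/3` (with
`dist(y,∅) = +∞`, which is captured by using the extended infimum distance). -/
theorem statement8 {Y : Type*} [NormedAddCommGroup Y] [NormedSpace ℝ Y] [CompleteSpace Y]
    (hinf : ¬ FiniteDimensional ℝ Y)
    (K : Set Y) (hK : IsCompact K) :
    ∀ ε > (0:ℝ), ∃ y : Y, ‖y‖ = ε ∧ ENNReal.ofReal (ε / 3) < EMetric.infEdist y K := by
  intro ε hε
  -- take a finite (ε/12)-net of K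
  obtain ⟨t, -, htfin, htcov⟩ := hK.finite_cover_balls (show (0:ℝ) < ε/12 by linarith)
  -- span of the net: a finite dimensional, hence closed, proper subspace
  set F : Submodule ℝ Y := Submodule.span ℝ t with hF
  have hFfd : FiniteDimensional ℝ F := FiniteDimensional.span_of_finite ℝ htfin
  have hFc : IsClosed (F : Set Y) := Submodule.closed_of_finiteDimensional F
  have hFne : ∃ x : Y, x ∉ F := by
    by_contra h
    push_neg at h
    have : F = ⊤ := by
      ext x; simp [h x]
    rw [this] at hFfd
    exact hinf (Submodule.topEquiv (R := ℝ) (M := Y)).finiteDimensional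
  obtain ⟨x, hxF, hx⟩ := riesz_lemma hFc hFne (show (1:ℝ)/2 < 1 by norm_num)
  have hx0 : x ≠ 0 := fun h => hxF (h ▸ F.zero_mem)
  have hxn : (0:ℝ) < ‖x‖ := norm_pos_iff.mpr hx0
  refine ⟨(ε / ‖x‖) • x, ?_, ?_⟩
  · rw [norm_smul, Real.norm_eq_abs, abs_of_pos (by positivity)]
    field_simp
  · -- distance from y to any point of F is at least ε/2
    have key : ∀ z ∈ F, ε / 2 ≤ ‖(ε / ‖x‖) • x - z‖ := by
      intro z hz
      have hz' : (‖x‖ / ε) • z ∈ F := F.smul_mem _ hz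
      have := hx _ hz'
      have heq : ‖(ε / ‖x‖) • x - z‖ = (ε / ‖x‖) * ‖x - (‖x‖ / ε) • z‖ := by
        have h3 : (ε / ‖x‖) • (x - (‖x‖ / ε) • z) = (ε / ‖x‖) • x - z := by
          rw [smul_sub, smul_smul, show ε / ‖x‖ * (‖x‖ / ε) = 1 by field_simp, one_smul]
        rw [← h3, norm_smul, Real.norm_eq_abs, abs_of_pos (show (0:ℝ) < ε / ‖x‖ by positivity)]
      rw [heq]
      calc ε / 2 = (ε / ‖x‖) * (1/2 * ‖x‖) := by field_simp
        _ ≤ (ε / ‖x‖) * ‖x - (‖x‖ / ε) • z‖ := by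
            apply mul_le_mul_of_nonneg_left this (by positivity)
    rw [EMetric.infEdist]
    refine lt_of_lt_of_le (b := ENNReal.ofReal (5 * ε / 12)) ?_ (le_iInf₂ fun k hk => ?_)
    · exact ENNReal.ofReal_lt_ofReal_iff_of_nonneg (by linarith) |>.mpr (by linarith)
    · -- edist y k ≥ ε/2 - ε/12 = 5ε/12
      obtain ⟨p, hp, hkp⟩ := by simpa using htcov hk
      have hpF : p ∈ F := Submodule.subset_span hp
      have h1 : ε / 2 ≤ ‖(ε / ‖x‖) • x - p‖ := key p hpF
      have h2 : dist k p < ε / 12 := hkp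
      have : 5 * ε / 12 ≤ dist ((ε / ‖x‖) • x) k := by
        have := dist_triangle ((ε / ‖x‖) • x) k p
        simp only [dist_eq_norm] at this h2 ⊢
        linarith
      rw [edist_dist]
      exact le_trans (ENNReal.ofReal_le_ofReal (by linarith)) le_rfl
end

section
/- If Y is an infinite dimensional Banach space and (K_n)_{n≥1} is a sequence of compact subsets of Y, then for any ε > 0 one can find y_n ∈ Y with ‖y_n‖ = ε for each n ≥ 1 such that the translates K'_n := y_n + K_n satisfy dist(K'_n,K'_m) > ε/3 for all n ≠ m, where dist(K,K') = inf{‖k' − k‖ : k ∈ K, k' ∈ K'}. -/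
open Metric Set

/-- Key step: in an infinite dimensional normed space, for any compact set `D` and `ε > 0`,
there is a point of norm `ε` whose distance to `D` exceeds `ε/3`. -/
theorem exists_norm_eq_far {Y : Type*} [NormedAddCommGroup Y] [NormedSpace ℝ Y]
    [CompleteSpace Y] (hinf : ¬ FiniteDimensional ℝ Y) {ε : ℝ} (hε : 0 < ε)
    (D : Set Y) (hD : IsCompact D) :
    ∃ y : Y, ‖y‖ = ε ∧ ∀ d ∈ D, ε / 3 < ‖y - d‖ := by
  obtain ⟨t, htfin, htsub⟩ := totallyBounded_iff.mp hD.totallyBounded (ε / 12) (by linarith)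
  set F : Submodule ℝ Y := Submodule.span ℝ t with hF
  haveI : FiniteDimensional ℝ F := FiniteDimensional.span_of_finite ℝ htfin
  have hFc : IsClosed (F : Set Y) := F.closed_of_finiteDimensional
  have hex : ∃ x : Y, x ∉ F := by
    by_contra h
    push_neg at h
    have htop : F = ⊤ := Submodule.eq_top_iff'.mpr h
    exact hinf ((LinearEquiv.ofEq F ⊤ htop).trans Submodule.topEquiv).finiteDimensional
  obtain ⟨x₀, hx₀F, hx₀⟩ := riesz_lemma (𝕜 := ℝ) hFc hex (r := 1/2) (by norm_num)
  have hx₀0 : x₀ ≠ 0 := fun h => hx₀F (h ▸ F.zero_mem)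
  have hn : 0 < ‖x₀‖ := norm_pos_iff.mpr hx₀0
  refine ⟨(ε / ‖x₀‖) • x₀, ?_, ?_⟩
  · rw [norm_smul, Real.norm_eq_abs, abs_of_pos (by positivity), div_mul_cancel₀ _ hn.ne']
  · intro d hd
    obtain ⟨c, hc, hdc⟩ := mem_iUnion₂.mp (htsub hd)
    have hcF : c ∈ F := Submodule.subset_span hc
    -- distance from our point to `c` is at least ε/2
    have h1 : ε / 2 ≤ ‖(ε / ‖x₀‖) • x₀ - c‖ := by
      have hcF' : (‖x₀‖ / ε) • c ∈ F := F.smul_mem _ hcF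
      have hb := hx₀ _ hcF'
      have heq2 : (ε / ‖x₀‖) • (x₀ - (‖x₀‖ / ε) • c) = (ε / ‖x₀‖) • x₀ - c := by
        rw [smul_sub, smul_smul, show (ε / ‖x₀‖) * (‖x₀‖ / ε) = 1 by field_simp, one_smul]
      have heq : ‖(ε / ‖x₀‖) • x₀ - c‖ = (ε / ‖x₀‖) * ‖x₀ - (‖x₀‖ / ε) • c‖ := by
        rw [← heq2, norm_smul_of_nonneg (by positivity)]
      rw [heq]
      have hpos : (0:ℝ) < ε / ‖x₀‖ := by positivity
      calc ε / 2 = (ε / ‖x₀‖) * (1/2 * ‖x₀‖) := by field_simp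
      _ ≤ (ε / ‖x₀‖) * ‖x₀ - (‖x₀‖ / ε) • c‖ := by
          exact mul_le_mul_of_nonneg_left hb hpos.le
    have h2 : ‖d - c‖ < ε / 12 := by
      rw [← dist_eq_norm]; exact mem_ball.mp hdc
    have htri : ‖(ε / ‖x₀‖) • x₀ - c‖ ≤ ‖(ε / ‖x₀‖) • x₀ - d‖ + ‖d - c‖ := by
      simpa [dist_eq_norm] using dist_triangle ((ε / ‖x₀‖) • x₀) d c
    linarith

/-- In an infinite dimensional Banach space, countably many compact sets can
be translated by vectors of norm `ε` so that the translates are pairwise `ε/3`-separated. -/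
theorem statement9 {Y : Type*} [NormedAddCommGroup Y] [NormedSpace ℝ Y] [CompleteSpace Y]
    (hinf : ¬ FiniteDimensional ℝ Y)
    (K : ℕ → Set Y) (hK : ∀ n, IsCompact (K n)) :
    ∀ ε > (0:ℝ), ∃ y : ℕ → Y, (∀ n, ‖y n‖ = ε) ∧
      ∀ n m : ℕ, n ≠ m → ∀ k ∈ K n, ∀ k' ∈ K m, ε / 3 < ‖(y m + k') - (y n + k)‖ := by
  intro ε hε
  have key := fun D hD => exists_norm_eq_far hinf hε D hD
  choose pt hpt1 hpt2 using key
  -- the set of points to avoid at stage `n`, given the earlier choices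
  set Dfun : ∀ n : ℕ, (∀ m, m < n → Y) → Set Y :=
    fun n ih => ⋃ m, ⋃ h : m < n, (fun p : Y × Y => ih m h + p.2 - p.1) '' (K n ×ˢ K m)
    with hDfun
  have hcomp : ∀ n ih, IsCompact (Dfun n ih) := by
    intro n ih
    have hrw : Dfun n ih = ⋃ p : {m // m < n},
        (fun q : Y × Y => ih p.1 p.2 + q.2 - q.1) '' (K n ×ˢ K p.1) :=
      (Set.iUnion_subtype (fun m => m < n)
        (fun p => (fun q : Y × Y => ih p.1 p.2 + q.2 - q.1) '' (K n ×ˢ K p.1))).symm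
    rw [hrw]
    exact isCompact_iUnion fun p =>
      ((hK n).prod (hK p.1)).image (by fun_prop)
  let y : ℕ → Y := WellFounded.fix Nat.lt_wfRel.wf
    (fun n ih => pt (Dfun n ih) (hcomp n ih))
  have heq : ∀ n, y n = pt (Dfun n (fun m _ => y m)) (hcomp n _) := fun n =>
    WellFounded.fix_eq _ _ n
  refine ⟨y, fun n => heq n ▸ hpt1 _ _, ?_⟩
  have main : ∀ m n, m < n → ∀ k ∈ K n, ∀ k' ∈ K m, ε / 3 < ‖y n - (y m + k' - k)‖ := by
    intro m n hmn k hk k' hk'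
    have hd : y m + k' - k ∈ Dfun n (fun m _ => y m) :=
      mem_iUnion.mpr ⟨m, mem_iUnion.mpr ⟨hmn, ⟨(k, k'), ⟨hk, hk'⟩, rfl⟩⟩⟩
    have := hpt2 (Dfun n (fun m _ => y m)) (hcomp n _) _ hd
    rw [← heq n] at this
    exact this
  intro n m hnm k hk k' hk'
  rcases lt_or_gt_of_ne hnm with h | h
  · have := main n m h k' hk' k hk
    have he : y m - (y n + k - k') = (y m + k') - (y n + k) := by abel
    rwa [he] at this
  · have := main m n h k hk k' hk'
    have he : y n - (y m + k' - k) = (y n + k) - (y m + k') := by abel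
    rw [he, norm_sub_rev] at this
    exact this
end

section
/- Let Y be a non-zero separable Banach space and φ ∈ Y* a non-zero continuous linear functional. Then there exists a G_δ subset 𝔾 of Y of Hausdorff dimension 1 such that 𝔾 contains a d-dense subset of the wedge space (i.e. for every wedge W in Y and every ε > 0 there is a wedge W' ⊆ 𝔾 with wedge distance d(W',W) < ε) and such that the intersection 𝔾 ∩ (y + ker φ) is totally disconnected for every y ∈ Y. -/
open Metric Set

/-- The wedge `W(t) = [t₁,t₂] ∪ [t₂,t₃]` determined by a triple of points. -/
def wedge {Y : Type*} [NormedAddCommGroup Y] [NormedSpace ℝ Y] (t : Y × Y × Y) : Set Y :=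
  segment ℝ t.1 t.2.1 ∪ segment ℝ t.2.1 t.2.2

/-- The standard wedge distance `max_{1≤i≤3} ‖t'ᵢ − tᵢ‖`. -/
def wedgeDist {Y : Type*} [NormedAddCommGroup Y] (t s : Y × Y × Y) : ℝ :=
  max ‖t.1 - s.1‖ (max ‖t.2.1 - s.2.1‖ ‖t.2.2 - s.2.2‖)

/-!
Fix a dense sequence of wedges whose legs `Sₙ` are transversal to `ker φ`, thin open
neighbourhoods `Uₙ ⊇ Sₙ`, and put `𝔾 = ⋂ₖ (⋃_{n<k} Sₙ ∪ ⋃_{n≥k} Uₙ)`: a `G_δ` set containing every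
leg, whose points off the legs lie in infinitely many `Uₙ`. If `Uₙ` is the `εₙ`-neighbourhood of
`Sₙ` with `εₙ` small enough, it is covered by `≈ |Sₙ| / εₙ` balls of radius `2εₙ` with
`∑ diam ^ (1 + 1/(n+1)) ≤ 2⁻ⁿ`, and, `Sₙ` being transversal, it meets each level set of `φ` in a set
of diameter `≤ 2⁻ⁿ`. By the Hausdorff–Cantelli lemma the part of `𝔾` off the legs has dimension
`≤ 1`, and each level set of `𝔾` is a countable set plus a `μH[1]`-null set, hence totally
disconnected.
-/

open Filter Topology MeasureTheory ENNReal AffineMap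

section HausdorffMeasure

variable {X ι : Type*} [EMetricSpace X] [MeasurableSpace X] [BorelSpace X]

theorem hausdorffMeasure_limsup_eq_zero [Countable ι] {s : ℝ} (hs : 0 < s) (C : ℕ → ι → Set X)
    (hC : ∑' n, ∑' i, ediam (C n i) ^ s ≠ ∞) :
    μH[s] (⋂ k, ⋃ n ≥ k, ⋃ i, C n i) = 0 := by
  let T : ℕ → ℝ≥0∞ := fun k => ∑' n, ∑' i, ediam (C (n + k) i) ^ s
  have hT : Tendsto T atTop (𝓝 0) := ENNReal.tendsto_sum_nat_add _ hC
  -- a single piece of the `k`-th tail is bounded by the tail sum, which tends to `0`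
  have hdiam : ∀ k n i, ediam (C (n + k) i) ≤ T k ^ s⁻¹ := fun k n i =>
    (ENNReal.le_rpow_inv_iff hs).2 <|
      (ENNReal.le_tsum (f := fun i => ediam (C (n + k) i) ^ s) i).trans
        (ENNReal.le_tsum (f := fun n => ∑' i, ediam (C (n + k) i) ^ s) n)
  have hr : Tendsto (fun k => T k ^ s⁻¹) atTop (𝓝 0) := by
    have := (ENNReal.continuous_rpow_const (y := s⁻¹)).tendsto 0 |>.comp hT
    rwa [ENNReal.zero_rpow_of_pos (inv_pos.2 hs)] at this
  have hcover : ∀ k, (⋂ k, ⋃ n ≥ k, ⋃ i, C n i) ⊆ ⋃ p : ℕ × ι, C (p.1 + k) p.2 := by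
    intro k x hx
    obtain ⟨n, hn, i, hi⟩ : ∃ n ≥ k, ∃ i, x ∈ C n i := by simpa using mem_iInter.1 hx k
    exact mem_iUnion.2 ⟨(n - k, i), by rwa [Nat.sub_add_cancel hn]⟩
  refine le_antisymm ?_ zero_le
  have key := Measure.hausdorffMeasure_le_liminf_tsum (ι := fun _ => ℕ × ι) s
    (⋂ k, ⋃ n ≥ k, ⋃ i, C n i) _ hr (fun k p => C (p.1 + k) p.2)
    (.of_forall fun k p => hdiam k p.1 p.2) (.of_forall hcover)
  simp only [ENNReal.tsum_prod'] at key
  exact key.trans_eq hT.liminf_eq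

theorem tsum_inv_two_pow_ne_top : ∑' n : ℕ, (2⁻¹ : ℝ≥0∞) ^ n ≠ ∞ := by
  rw [ENNReal.tsum_geometric, ENNReal.one_sub_inv_two, inv_inv]
  exact ofNat_ne_top

theorem dimH_limsup_le_one [Countable ι] {U : ℕ → Set X} (C : ℕ → ι → Set X)
    (hUC : ∀ n, U n ⊆ ⋃ i, C n i)
    (hC : ∀ (n : ℕ) (s : ℝ), 1 + ((n : ℝ) + 1)⁻¹ ≤ s → ∑' i, ediam (C n i) ^ s ≤ 2⁻¹ ^ n) :
    dimH (⋂ k, ⋃ n ≥ k, U n) ≤ 1 := by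
  refine dimH_le fun d hd => le_of_not_gt fun hd1 => ?_
  replace hd1 : (1 : ℝ) < d := by exact_mod_cast hd1
  obtain ⟨N, hN⟩ := exists_nat_one_div_lt (sub_pos.2 hd1)
  have hsub : (⋂ k, ⋃ n ≥ k, U n) ⊆ ⋂ k, ⋃ n ≥ k, ⋃ i, C (n + N) i := by
    refine subset_iInter fun k x hx => ?_
    obtain ⟨n, hn, hxn⟩ : ∃ n ≥ k + N, x ∈ U n := by simpa using mem_iInter.1 hx (k + N)
    refine mem_iUnion₂.2 ⟨n - N, by omega, ?_⟩
    rw [Nat.sub_add_cancel (by omega)]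
    exact hUC n hxn
  have hsum : ∑' n, ∑' i, ediam (C (n + N) i) ^ (d : ℝ) ≠ ∞ := by
    refine ne_top_of_le_ne_top tsum_inv_two_pow_ne_top (ENNReal.tsum_le_tsum fun n => ?_)
    refine (hC (n + N) d ?_).trans
      (pow_le_pow_of_le_one zero_le (by norm_num) (Nat.le_add_right n N))
    have : ((n + N : ℕ) + 1 : ℝ)⁻¹ ≤ 1 / ((N : ℝ) + 1) := by
      rw [one_div]; gcongr; exact_mod_cast Nat.le_add_left N n
    linarith
  have := measure_mono_null hsub (hausdorffMeasure_limsup_eq_zero (by positivity) _ hsum)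
  exact zero_ne_top (this ▸ hd)

theorem hausdorffMeasure_one_limsup_eq_zero {V : ℕ → Set X} (hV : ∀ n, ediam (V n) ≤ 2⁻¹ ^ n) :
    μH[1] (⋂ k, ⋃ n ≥ k, V n) = 0 := by
  simpa [iUnion_const] using
    hausdorffMeasure_limsup_eq_zero one_pos (fun n (_ : Unit) => V n) <|
      ne_top_of_le_ne_top tsum_inv_two_pow_ne_top
        (ENNReal.tsum_le_tsum fun n => by simpa using hV n)

end HausdorffMeasure

theorem isTotallyDisconnected_of_hausdorffMeasure_eq_zero {X : Type*} [MetricSpace X]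
    [MeasurableSpace X] [BorelSpace X] {s : Set X} (hs : μH[1] s = 0) :
    IsTotallyDisconnected s := by
  intro t hts htc x hx y hy
  have hIcc : Icc 0 (dist x y) ⊆ dist x '' t :=
    (htc.image _ (continuous_const.dist continuous_id).continuousOn).Icc_subset
      ⟨x, hx, dist_self x⟩ ⟨y, hy, rfl⟩
  -- `dist x` is 1-Lipschitz, so it cannot map a `μH[1]`-null set onto an interval
  have himage : μH[1] (dist x '' t) = 0 := by
    simpa [measure_mono_null hts hs] using
      (LipschitzWith.dist_right x).hausdorffMeasure_image_le zero_le_one t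
  have := measure_mono_null hIcc himage
  rw [hausdorffMeasure_real, Real.volume_Icc, sub_zero, ENNReal.ofReal_eq_zero] at this
  exact dist_le_zero.1 this

section GδHull

variable {X : Type*} {S U : ℕ → Set X}

def gdeltaHull (S U : ℕ → Set X) : Set X := ⋂ k, ((⋃ n < k, S n) ∪ ⋃ n ≥ k, U n)

theorem isGδ_gdeltaHull [TopologicalSpace X] [PerfectlyNormalSpace X] (hS : ∀ n, IsClosed (S n))
    (hU : ∀ n, IsOpen (U n)) : IsGδ (gdeltaHull S U) :=
  .iInter fun k => ((finite_lt_nat k).isClosed_biUnion fun n _ => hS n).isGδ.union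
    (isOpen_biUnion fun n _ => hU n).isGδ

theorem subset_gdeltaHull (hSU : ∀ n, S n ⊆ U n) (n : ℕ) : S n ⊆ gdeltaHull S U :=
  fun _ hx => mem_iInter.2 fun k => (lt_or_ge n k).imp
    (fun h => mem_biUnion h hx) (fun h => mem_biUnion h (hSU n hx))

theorem gdeltaHull_subset : gdeltaHull S U ⊆ (⋃ n, S n) ∪ ⋂ k, ⋃ n ≥ k, U n := fun _ hx =>
  or_iff_not_imp_left.2 fun hS => mem_iInter.2 fun k => (mem_iInter.1 hx k).resolve_left
    fun h => hS (iUnion₂_subset_iUnion _ _ h)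

end GδHull

theorem ediam_ball_le {X : Type*} [PseudoMetricSpace X] (x : X) (r : ℝ) :
    ediam (ball x r) ≤ ENNReal.ofReal (2 * r) := by
  rw [← eball_ofReal, ENNReal.ofReal_mul zero_le_two, ENNReal.ofReal_ofNat]
  exact ediam_eball_le

theorem tsum_ediam_rpow_iUnion_ball_le {X : Type*} [PseudoMetricSpace X] {s : ℝ} (hs : 0 < s)
    (x : ℕ → X) (r : ℝ) (m : ℕ) :
    ∑' j, ediam (⋃ (_ : j ≤ m), ball (x j) r) ^ s ≤ (m + 1) * ENNReal.ofReal (2 * r) ^ s := by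
  rw [tsum_eq_sum (s := Finset.range (m + 1)) fun j hj => by
    simp [Nat.lt_succ_iff.not.1 (Finset.mem_range.not.1 hj), ENNReal.zero_rpow_of_pos hs]]
  refine (Finset.sum_le_card_nsmul _ _ _ fun j hj => ?_).trans_eq
    (by rw [Finset.card_range, nsmul_eq_mul, Nat.cast_add, Nat.cast_one])
  simp only [Nat.lt_succ_iff.1 (Finset.mem_range.1 hj), iUnion_true]
  exact ENNReal.rpow_le_rpow (ediam_ball_le _ _) hs.le

section Segment

variable {E : Type*} [NormedAddCommGroup E] [NormedSpace ℝ E] {a b : E}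

theorem isCompact_segment (a b : E) : IsCompact (segment ℝ a b) := by
  rw [segment_eq_image_lineMap]
  exact isCompact_Icc.image lineMap_continuous

theorem dimH_segment_eq_one (h : a ≠ b) : dimH (segment ℝ a b) = 1 := by
  borelize E
  have := hausdorffMeasure_segment a b
  simpa using dimH_of_hausdorffMeasure_ne_zero_ne_top (d := 1) (by simpa [this] using h)
    (by simp [this])

theorem thickening_segment_subset_iUnion_ball {ε : ℝ} {m : ℕ} (hm : 0 < m)
    (hab : dist a b ≤ m * ε) :
    thickening ε (segment ℝ a b) ⊆ ⋃ j ≤ m, ball (lineMap a b ((j : ℝ) / m)) (2 * ε) := by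
  intro x hx
  obtain ⟨z, hz, hxz⟩ := mem_thickening_iff.1 hx
  rw [segment_eq_image_lineMap] at hz
  obtain ⟨θ, ⟨hθ0, hθ1⟩, rfl⟩ := hz
  have hm' : (0 : ℝ) < m := Nat.cast_pos.2 hm
  set j := ⌊θ * m⌋₊
  have hj : (j : ℝ) ≤ θ * m := Nat.floor_le (by positivity)
  have hj' : θ * m < j + 1 := Nat.lt_floor_add_one _
  have hjm : j ≤ m := Nat.cast_le.1 (hj.trans (by nlinarith))
  have hdist : dist (lineMap a b θ) (lineMap a b ((j : ℝ) / m)) ≤ ε := by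
    rw [dist_lineMap_lineMap, Real.dist_eq]
    have : |θ - j / m| ≤ 1 / m := by
      rw [show θ - j / m = (θ * m - j) / m by field_simp, abs_div, abs_of_pos hm',
        abs_of_nonneg (by linarith)]
      exact div_le_div_of_nonneg_right (by linarith) hm'.le
    calc |θ - j / m| * dist a b ≤ 1 / m * (m * ε) := by gcongr
      _ = ε := by field_simp
  refine mem_iUnion₂.2 ⟨j, hjm, ?_⟩
  rw [mem_ball]
  linarith [dist_triangle x (lineMap a b θ) (lineMap a b ((j : ℝ) / m))]

theorem exists_cover_thickening_segment_tsum_le (a b : E) {ε t : ℝ} (hε : 0 < ε)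
    (h4ε : 4 * ε ≤ 1) (ht : 0 ≤ t) :
    ∃ C : ℕ → Set E, thickening ε (segment ℝ a b) ⊆ ⋃ j, C j ∧ ∀ s, 1 + t ≤ s →
      ∑' j, ediam (C j) ^ s ≤ ENNReal.ofReal ((4 * ε) ^ t * (4 * dist a b + 12 * ε)) := by
  set m := ⌈dist a b / ε⌉₊ + 1
  have hm : dist a b / ε + 1 ≤ m := by
    simp only [m, Nat.cast_add, Nat.cast_one]; gcongr; exact Nat.le_ceil _
  have hm' : (m : ℝ) + 1 ≤ dist a b / ε + 3 := by
    have := Nat.ceil_lt_add_one (div_nonneg dist_nonneg hε.le : 0 ≤ dist a b / ε)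
    simp only [m, Nat.cast_add, Nat.cast_one]; linarith
  refine ⟨fun j => ⋃ (_ : j ≤ m), ball (lineMap a b ((j : ℝ) / m)) (2 * ε),
    thickening_segment_subset_iUnion_ball (Nat.succ_pos _) ?_, fun s hs => ?_⟩
  · rw [← div_le_iff₀ hε]; linarith
  calc ∑' j, ediam (⋃ (_ : j ≤ m), ball (lineMap a b ((j : ℝ) / m)) (2 * ε)) ^ s
      ≤ (m + 1) * ENNReal.ofReal (2 * (2 * ε)) ^ s :=
        tsum_ediam_rpow_iUnion_ball_le (by linarith) _ _ _
    _ ≤ (m + 1) * ENNReal.ofReal (4 * ε) ^ (1 + t) := by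
        rw [← mul_assoc, show (2 : ℝ) * 2 = 4 by norm_num]
        exact mul_le_mul_of_nonneg_left (ENNReal.rpow_le_rpow_of_exponent_ge
          (ENNReal.ofReal_le_one.2 h4ε) hs) zero_le
    _ = ENNReal.ofReal ((m + 1) * (4 * ε) ^ (1 + t)) := by
        rw [ENNReal.ofReal_mul (by positivity : (0 : ℝ) ≤ m + 1),
          ← ENNReal.ofReal_rpow_of_nonneg (by positivity) (by linarith)]
        congr 1
        exact_mod_cast (ENNReal.ofReal_natCast (m + 1)).symm
    _ ≤ ENNReal.ofReal ((4 * ε) ^ t * (4 * dist a b + 12 * ε)) := by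
        refine ENNReal.ofReal_le_ofReal ?_
        rw [Real.rpow_add (by positivity), Real.rpow_one]
        calc ((m : ℝ) + 1) * (4 * ε * (4 * ε) ^ t)
            ≤ (dist a b / ε + 3) * (4 * ε * (4 * ε) ^ t) := by gcongr
          _ = (4 * ε) ^ t * (4 * dist a b + 12 * ε) := by field_simp; ring

theorem eventually_exists_cover_thickening_segment (a b : E) {t : ℝ} (ht : 0 < t) {r : ℝ≥0∞}
    (hr : 0 < r) :
    ∀ᶠ ε in 𝓝[>] 0, ∃ C : ℕ → Set E, thickening ε (segment ℝ a b) ⊆ ⋃ j, C j ∧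
      ∀ s, 1 + t ≤ s → ∑' j, ediam (C j) ^ s ≤ r := by
  have hcost : Tendsto (fun ε : ℝ => ENNReal.ofReal ((4 * ε) ^ t * (4 * dist a b + 12 * ε)))
      (𝓝 0) (𝓝 0) := by
    have : Continuous fun ε : ℝ => (4 * ε) ^ t * (4 * dist a b + 12 * ε) :=
      ((Real.continuous_rpow_const ht.le).comp (continuous_const_mul 4)).mul (by fun_prop)
    simpa [Real.zero_rpow ht.ne'] using ENNReal.tendsto_ofReal (this.tendsto 0)
  have h4 : Tendsto (fun ε : ℝ => 4 * ε) (𝓝 0) (𝓝 0) := by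
    simpa using (continuous_const_mul (4 : ℝ)).tendsto 0
  filter_upwards [self_mem_nhdsWithin, nhdsWithin_le_nhds (hcost.eventually_lt_const hr),
    nhdsWithin_le_nhds (h4.eventually_lt_const one_pos)] with ε (hε : 0 < ε) hcostε h4ε
  obtain ⟨C, hC, hCs⟩ := exists_cover_thickening_segment_tsum_le a b hε h4ε.le ht.le
  exact ⟨C, hC, fun s hs => (hCs s hs).trans hcostε.le⟩

variable (φ : E →L[ℝ] ℝ)

theorem dist_mul_abs_sub_eq_of_mem_segment {x y : E} (hx : x ∈ segment ℝ a b)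
    (hy : y ∈ segment ℝ a b) : dist x y * |φ a - φ b| = |φ x - φ y| * dist a b := by
  rw [segment_eq_image_lineMap] at hx hy
  obtain ⟨θ, -, rfl⟩ := hx
  obtain ⟨θ', -, rfl⟩ := hy
  have : φ (lineMap a b θ) - φ (lineMap a b θ') = (θ' - θ) * (φ a - φ b) := by
    simp only [lineMap_apply_module, map_add, map_smul, smul_eq_mul]; ring
  rw [dist_lineMap_lineMap, this, abs_mul, Real.dist_eq, abs_sub_comm]
  ring

theorem segment_inter_setOf_eq_subsingleton (hab : φ a ≠ φ b) (c : ℝ) :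
    (segment ℝ a b ∩ {z | φ z = c}).Subsingleton := by
  rintro x ⟨hx, hxc : φ x = c⟩ y ⟨hy, hyc : φ y = c⟩
  have := dist_mul_abs_sub_eq_of_mem_segment φ hx hy
  rw [hxc, hyc, sub_self, abs_zero, zero_mul, mul_eq_zero, dist_eq_zero] at this
  exact this.resolve_right (abs_ne_zero.2 (sub_ne_zero.2 hab))

theorem ediam_thickening_segment_inter_setOf_eq_le (hab : φ a ≠ φ b) (ε c : ℝ) :
    ediam (thickening ε (segment ℝ a b) ∩ {z | φ z = c}) ≤
      ENNReal.ofReal (2 * ε * (1 + ‖φ‖ * dist a b / |φ a - φ b|)) := by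
  refine ediam_le fun x ⟨hx, (hxc : φ x = c)⟩ y ⟨hy, (hyc : φ y = c)⟩ => ?_
  obtain ⟨x', hx', hxx'⟩ := mem_thickening_iff.1 hx
  obtain ⟨y', hy', hyy'⟩ := mem_thickening_iff.1 hy
  have hΔ : 0 < |φ a - φ b| := abs_pos.2 (sub_ne_zero.2 hab)
  -- the points `x'`, `y'` of the segment near `x`, `y` almost lie on one level set, and by
  -- transversality this forces them to be close
  have hφ : |φ x' - φ y'| ≤ 2 * ‖φ‖ * ε := by
    have h : φ x' - φ y' = φ (x' - x) + φ (y - y') := by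
      rw [map_sub, map_sub, hxc, hyc]; ring
    rw [h, ← Real.norm_eq_abs]
    refine (norm_add_le _ _).trans ?_
    have h1 := φ.le_opNorm (x' - x)
    have h2 := φ.le_opNorm (y - y')
    rw [← dist_eq_norm, dist_comm] at h1
    rw [← dist_eq_norm] at h2
    nlinarith [norm_nonneg φ]
  have hx'y' : dist x' y' ≤ 2 * ‖φ‖ * ε * dist a b / |φ a - φ b| := by
    rw [le_div_iff₀ hΔ, dist_mul_abs_sub_eq_of_mem_segment φ hx' hy']
    exact mul_le_mul_of_nonneg_right hφ dist_nonneg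
  rw [edist_dist]
  refine ENNReal.ofReal_le_ofReal ((dist_triangle4 x x' y' y).trans ?_)
  rw [dist_comm y' y]
  calc dist x x' + dist x' y' + dist y y' ≤ ε + 2 * ‖φ‖ * ε * dist a b / |φ a - φ b| + ε := by
        gcongr
    _ = _ := by ring

theorem eventually_ediam_thickening_segment_inter_setOf_eq_le (hab : φ a ≠ φ b) {r : ℝ≥0∞}
    (hr : 0 < r) :
    ∀ᶠ ε in 𝓝[>] 0, ∀ c, ediam (thickening ε (segment ℝ a b) ∩ {z | φ z = c}) ≤ r := by
  have : Tendsto (fun ε => ENNReal.ofReal (2 * ε * (1 + ‖φ‖ * dist a b / |φ a - φ b|)))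
      (𝓝 0) (𝓝 0) := by
    simpa using ENNReal.tendsto_ofReal
      (((continuous_const_mul (2 : ℝ)).mul continuous_const).tendsto 0)
  filter_upwards [nhdsWithin_le_nhds (this.eventually_lt_const hr)] with ε hε c
  exact (ediam_thickening_segment_inter_setOf_eq_le φ hab ε c).trans hε.le

theorem exists_isGδ_dimH_eq_one_segment_subset (p : ℕ → E × E)
    (hp : ∀ n, φ (p n).1 ≠ φ (p n).2) :
    ∃ G : Set E, IsGδ G ∧ dimH G = 1 ∧ (∀ n, segment ℝ (p n).1 (p n).2 ⊆ G) ∧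
      ∀ c, IsTotallyDisconnected (G ∩ {z | φ z = c}) := by
  borelize E
  have hr : ∀ n : ℕ, (0 : ℝ≥0∞) < 2⁻¹ ^ n := fun n => ENNReal.pow_pos (by norm_num) n
  choose ε hε hlevel C hC hcost using fun n =>
    (eventually_mem_nhdsWithin.and ((eventually_ediam_thickening_segment_inter_setOf_eq_le φ (hp n)
      (hr n)).and (eventually_exists_cover_thickening_segment (p n).1 (p n).2
        (t := ((n : ℝ) + 1)⁻¹) (by positivity) (hr n)))).exists
  have hne : ∀ n, (p n).1 ≠ (p n).2 := fun n h => hp n (congrArg φ h)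
  set S := fun n => segment ℝ (p n).1 (p n).2
  set U := fun n => thickening (ε n) (S n)
  have hSU : ∀ n, S n ⊆ U n := fun n => self_subset_thickening (hε n) _
  have hG : gdeltaHull S U ⊆ (⋃ n, S n) ∪ ⋂ k, ⋃ n ≥ k, U n := gdeltaHull_subset
  refine ⟨gdeltaHull S U, isGδ_gdeltaHull (fun n => (isCompact_segment _ _).isClosed)
    (fun n => isOpen_thickening), le_antisymm ?_ ?_, subset_gdeltaHull hSU, fun c => ?_⟩
  · refine (dimH_mono hG).trans ?_
    rw [dimH_union, dimH_iUnion]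
    exact max_le (iSup_le fun n => (dimH_segment_eq_one (hne n)).le)
      (dimH_limsup_le_one C hC hcost)
  · exact (dimH_segment_eq_one (hne 0)).ge.trans (dimH_mono (subset_gdeltaHull hSU 0))
  refine isTotallyDisconnected_of_hausdorffMeasure_eq_zero
    (measure_mono_null (inter_subset_inter_left _ hG) ?_)
  rw [union_inter_distrib_right, iUnion_inter]
  have := Measure.nullSingletonClass_hausdorff E one_pos
  refine measure_union_null (measure_iUnion_null fun n =>
    (segment_inter_setOf_eq_subsingleton φ (hp n) c).measure_zero _) ?_
  simp only [iInter_inter, iUnion₂_inter]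
  exact hausdorffMeasure_one_limsup_eq_zero fun n => hlevel n c

end Segment

theorem wedgeDist_eq_dist {Y : Type*} [NormedAddCommGroup Y] (t s : Y × Y × Y) :
    wedgeDist t s = dist t s := by
  rw [Prod.dist_eq, Prod.dist_eq]
  simp only [wedgeDist, dist_eq_norm]

theorem dense_setOf_apply_ne_zero {F : Type*} [TopologicalSpace F] [AddCommGroup F]
    [ContinuousAdd F] [Module ℝ F] [ContinuousSMul ℝ F] {ψ : F →L[ℝ] ℝ} (hψ : ψ ≠ 0) :
    Dense {x | ψ x ≠ 0} := by
  have : {x | ψ x ≠ 0} = ((LinearMap.ker (ψ : F →ₗ[ℝ] ℝ) : Set F))ᶜ := by ext; simp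
  rw [this, ← interior_eq_empty_iff_dense_compl, ← not_nonempty_iff_eq_empty]
  intro h
  refine hψ (ContinuousLinearMap.coe_injective ?_)
  simpa using LinearMap.ker_eq_top.1 (Submodule.eq_top_of_nonempty_interior' _ h)

section Wedge

variable {Y : Type*} [NormedAddCommGroup Y] [NormedSpace ℝ Y]

theorem exists_denseRange_transversal [TopologicalSpace.SeparableSpace Y] {φ : Y →L[ℝ] ℝ}
    (hφ : φ ≠ 0) : ∃ w : ℕ → Y × Y × Y, DenseRange w ∧
      ∀ n, φ (w n).1 ≠ φ (w n).2.1 ∧ φ (w n).2.1 ≠ φ (w n).2.2 := by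
  obtain ⟨v, hv⟩ := DFunLike.ne_iff.1 hφ
  let π₁ := ContinuousLinearMap.fst ℝ Y (Y × Y)
  let π₂ := (ContinuousLinearMap.fst ℝ Y Y).comp (ContinuousLinearMap.snd ℝ Y (Y × Y))
  let π₃ := (ContinuousLinearMap.snd ℝ Y Y).comp (ContinuousLinearMap.snd ℝ Y (Y × Y))
  let ψ₁ := φ.comp π₁ - φ.comp π₂
  let ψ₂ := φ.comp π₂ - φ.comp π₃
  have hψ₁ : ψ₁ ≠ 0 := DFunLike.ne_iff.2 ⟨(v, 0, 0), by simpa [ψ₁, π₁, π₂] using hv⟩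
  have hψ₂ : ψ₂ ≠ 0 := DFunLike.ne_iff.2 ⟨(0, v, 0), by simpa [ψ₂, π₂, π₃] using hv⟩
  have hA : Dense ({t | ψ₁ t ≠ 0} ∩ {t | ψ₂ t ≠ 0}) :=
    (dense_setOf_apply_ne_zero hψ₁).inter_of_isOpen_left (dense_setOf_apply_ne_zero hψ₂)
      (isOpen_ne_fun ψ₁.continuous continuous_const)
  obtain ⟨D, hDA, hDc, hD⟩ := hA.exists_countable_dense_subset
  obtain ⟨w, rfl⟩ := hDc.exists_eq_range hD.nonempty
  refine ⟨w, hD, fun n => ?_⟩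
  simpa [ψ₁, ψ₂, π₁, π₂, π₃, sub_ne_zero] using hDA (mem_range_self n)

def wedgeLeg (w : ℕ → Y × Y × Y) (k : ℕ) : Y × Y :=
  if Even k then ((w (k / 2)).1, (w (k / 2)).2.1) else ((w (k / 2)).2.1, (w (k / 2)).2.2)

theorem wedge_eq_union_wedgeLeg (w : ℕ → Y × Y × Y) (n : ℕ) :
    wedge (w n) = segment ℝ (wedgeLeg w (2 * n)).1 (wedgeLeg w (2 * n)).2 ∪
      segment ℝ (wedgeLeg w (2 * n + 1)).1 (wedgeLeg w (2 * n + 1)).2 := by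
  have h₁ : (2 * n + 1) / 2 = n := by omega
  simp [wedge, wedgeLeg, h₁]

theorem wedgeLeg_transversal {φ : Y →L[ℝ] ℝ} {w : ℕ → Y × Y × Y}
    (hw : ∀ n, φ (w n).1 ≠ φ (w n).2.1 ∧ φ (w n).2.1 ≠ φ (w n).2.2) (k : ℕ) :
    φ (wedgeLeg w k).1 ≠ φ (wedgeLeg w k).2 := by
  unfold wedgeLeg
  split_ifs
  exacts [(hw _).1, (hw _).2]

end Wedge

theorem statement11_general {Y : Type*} [NormedAddCommGroup Y] [NormedSpace ℝ Y]
    [TopologicalSpace.SeparableSpace Y]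
    (φ : Y →L[ℝ] ℝ) (hφ : φ ≠ 0) :
    ∃ 𝔾 : Set Y, IsGδ 𝔾 ∧ dimH 𝔾 = 1 ∧
      (∀ t : Y × Y × Y, ∀ ε > (0:ℝ),
        ∃ t' : Y × Y × Y, wedge t' ⊆ 𝔾 ∧ wedgeDist t' t < ε) ∧
      ∀ y : Y, IsTotallyDisconnected (𝔾 ∩ {z : Y | φ z = φ y}) := by
  obtain ⟨w, hdense, hw⟩ := exists_denseRange_transversal hφ
  obtain ⟨G, hGδ, hdim, hseg, hdisc⟩ :=
    exists_isGδ_dimH_eq_one_segment_subset φ (wedgeLeg w) (wedgeLeg_transversal hw)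
  refine ⟨G, hGδ, hdim, fun t ε hε => ?_, fun y => hdisc (φ y)⟩
  obtain ⟨n, hn⟩ := hdense.exists_dist_lt t hε
  refine ⟨w n, ?_, by rwa [wedgeDist_eq_dist, dist_comm]⟩
  rw [wedge_eq_union_wedgeLeg]
  exact union_subset (hseg _) (hseg _)

/-- In a non-zero separable Banach space there is a `G_δ` set `𝔾` of
Hausdorff dimension `1` containing a dense set of wedges, whose intersection with each
translate of `ker φ` is totally disconnected. -/
theorem statement11 {Y : Type*} [NormedAddCommGroup Y] [NormedSpace ℝ Y] [CompleteSpace Y]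
    [Nontrivial Y] [TopologicalSpace.SeparableSpace Y]
    (φ : Y →L[ℝ] ℝ) (hφ : φ ≠ 0) :
    ∃ 𝔾 : Set Y, IsGδ 𝔾 ∧ dimH 𝔾 = 1 ∧
      (∀ t : Y × Y × Y, ∀ ε > (0:ℝ),
        ∃ t' : Y × Y × Y, wedge t' ⊆ 𝔾 ∧ wedgeDist t' t < ε) ∧
      ∀ y : Y, IsTotallyDisconnected (𝔾 ∩ {z : Y | φ z = φ y}) :=
  statement11_general φ hφ
end

section
/- If Θ : (0,∞) → (0,2] satisfies Θ(t) → 0 as t → 0⁺, then there exists a function Ω : (0,∞) → (0,∞) such that: (1) Ω(t) ≥ 2Θ(t) for all t > 0; (2) Ω(t) → 0 as t → 0⁺; and (3) Ω(A) + 2B ≤ Ω(A+B) for all A, B > 0. -/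
open Set Filter Topology

/-! Replace `Θ` by its running supremum `S t = sup Θ((0, t])`, which is monotone, dominates `Θ`
and still tends to `0`; then `Ω t = 2 t + 2 S t` works, the linear term supplying `2 B` in (3). -/

theorem eventually_forall_Ioc_of_eventually_nhdsGT {α : Type*} [LinearOrder α]
    [TopologicalSpace α] [OrderTopology α] [NoMaxOrder α] {a : α} {p : α → Prop}
    (h : ∀ᶠ s in 𝓝[>] a, p s) : ∀ᶠ t in 𝓝[>] a, ∀ s ∈ Ioc a t, p s := by
  obtain ⟨u, hau, hsub⟩ := mem_nhdsGT_iff_exists_Ioo_subset.1 h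
  filter_upwards [Ioo_mem_nhdsGT hau] with t ht s hs
  exact hsub ⟨hs.1, hs.2.trans_lt ht.2⟩

/-- Junk value `0` when `f` is unbounded above on `(0, t]`. -/
noncomputable def runningSup (f : ℝ → ℝ) (t : ℝ) : ℝ := sSup (f '' Ioc 0 t)

theorem le_runningSup {f : ℝ → ℝ} {s t : ℝ} (hbdd : BddAbove (f '' Ioc 0 t))
    (hs : s ∈ Ioc 0 t) : f s ≤ runningSup f t :=
  le_csSup hbdd (mem_image_of_mem f hs)

theorem runningSup_le_runningSup {f : ℝ → ℝ} {a b : ℝ} (hbdd : BddAbove (f '' Ioc 0 b))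
    (ha : 0 < a) (hab : a ≤ b) : runningSup f a ≤ runningSup f b :=
  csSup_le_csSup hbdd ⟨f a, mem_image_of_mem f ⟨ha, le_rfl⟩⟩
    (image_mono (Ioc_subset_Ioc_right hab))

theorem tendsto_runningSup {f : ℝ → ℝ} (hf : Tendsto f (𝓝[>] 0) (𝓝 0)) :
    Tendsto (runningSup f) (𝓝[>] 0) (𝓝 0) := by
  have hsmall : ∀ c > (0 : ℝ), ∀ᶠ t in 𝓝[>] (0 : ℝ), ∀ s ∈ Ioc 0 t, f s < c := fun c hc =>
    eventually_forall_Ioc_of_eventually_nhdsGT (hf.eventually (gt_mem_nhds hc))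
  refine tendsto_order.2 ⟨fun c hc => ?_, fun c hc => ?_⟩
  · -- near `0`, `f` is bounded on `(0, t]`, so `runningSup f t ≥ f t > c`
    filter_upwards [hsmall 1 one_pos, hf.eventually (lt_mem_nhds hc), self_mem_nhdsWithin]
      with t hbound hct ht
    exact hct.trans_le (le_runningSup ⟨1, by rintro _ ⟨s, hs, rfl⟩; exact (hbound s hs).le⟩
      ⟨ht, le_rfl⟩)
  · filter_upwards [hsmall (c / 2) (half_pos hc), self_mem_nhdsWithin] with t hbound ht
    have hle : runningSup f t ≤ c / 2 :=
      csSup_le ⟨f t, mem_image_of_mem f ⟨ht, le_rfl⟩⟩ (by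
        rintro _ ⟨s, hs, rfl⟩; exact (hbound s hs).le)
    linarith

/-- Lemma 5.1 of the paper: upgrading `Θ` to a function `Ω` with the
superadditivity-type property (3). -/
theorem statement14 (Θ : ℝ → ℝ) (hΘ : ∀ t > (0:ℝ), 0 < Θ t ∧ Θ t ≤ 2)
    (hΘ0 : Tendsto Θ (nhdsWithin 0 (Ioi 0)) (nhds 0)) :
    ∃ Ω : ℝ → ℝ, (∀ t > (0:ℝ), 0 < Ω t) ∧ (∀ t > (0:ℝ), 2 * Θ t ≤ Ω t) ∧
      Tendsto Ω (nhdsWithin 0 (Ioi 0)) (nhds 0) ∧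
      ∀ A B : ℝ, 0 < A → 0 < B → Ω A + 2 * B ≤ Ω (A + B) := by
  have hbdd : ∀ t, BddAbove (Θ '' Ioc 0 t) := fun t =>
    ⟨2, by rintro _ ⟨s, hs, rfl⟩; exact (hΘ s hs.1).2⟩
  have hΘS : ∀ t > (0 : ℝ), Θ t ≤ runningSup Θ t := fun t ht =>
    le_runningSup (hbdd t) ⟨ht, le_rfl⟩
  refine ⟨fun t => 2 * t + 2 * runningSup Θ t, fun t ht => ?_, fun t ht => ?_, ?_,
    fun A B hA hB => ?_⟩
  · linarith [(hΘ t ht).1, hΘS t ht]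
  · linarith [hΘS t ht]
  · have hid : Tendsto (fun t : ℝ => t) (𝓝[>] 0) (𝓝 0) := tendsto_nhdsWithin_of_tendsto_nhds
      tendsto_id
    simpa using (hid.const_mul 2).add ((tendsto_runningSup hΘ0).const_mul 2)
  · linarith [runningSup_le_runningSup (hbdd (A + B)) hA (le_add_of_nonneg_right hB.le)]
end

section
/- Let (Y,d) be a metric space and (K_r)_{r∈R} a family of non-empty compact subsets of Y indexed by a metric space (R,γ) with Hausdorff distance H(K_r,K_s) ≤ γ(r,s) for all r,s. Let 𝔾 ⊆ Y contain K_r for every r in a γ-dense subset R' ⊆ R, let ρ ∈ (0,1) and ε₀ > 0, and assume for every ε ∈ (0,ε₀) there is R(ε) ⊆ R with: (a) for every s ∈ R there exists t ∈ R(ε) with γ(t,s) < ε, and (b) every subset of Y of diameter at most ρε meets K_r for only finitely many r ∈ R(ε). Then for every ε ∈ (0,ε₀) there exists R'(ε) ⊆ R such that K_r ⊆ 𝔾 for all r ∈ R'(ε), for every r ∈ R there exists t ∈ R'(ε) with γ(t,r) < ε, and for every subset B ⊆ Y of diameter at most (4/5)ρε the set {t ∈ R'(ε) : K_t ∩ B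 ≠ ∅} is finite. -/
open Metric Set

/-- Refining the families `R(ε)` to families `R'(ε)` of compacts lying
inside `𝔾`. -/
theorem statement15 {Y R : Type*} [MetricSpace Y] [MetricSpace R]
    (K : R → Set Y) (hKne : ∀ r, (K r).Nonempty) (hKcpt : ∀ r, IsCompact (K r))
    (hKdist : ∀ r s, hausdorffDist (K r) (K s) ≤ dist r s)
    (𝔾 : Set Y) (R' : Set R)
    (hR'dense : ∀ (r : R) (ε : ℝ), 0 < ε → ∃ t ∈ R', dist t r < ε)
    (hR'sub : ∀ r ∈ R', K r ⊆ 𝔾)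
    (ρ ε₀ : ℝ) (hρ : 0 < ρ) (hρ1 : ρ < 1) (hε₀ : 0 < ε₀)
    (hfin : ∀ ε : ℝ, 0 < ε → ε < ε₀ → ∃ Rε : Set R,
      (∀ s : R, ∃ t ∈ Rε, dist t s < ε) ∧
      (∀ S : Set Y, Metric.diam S ≤ ρ * ε → {r ∈ Rε | (S ∩ K r).Nonempty}.Finite)) :
    ∀ ε : ℝ, 0 < ε → ε < ε₀ → ∃ R'ε : Set R,
      (∀ r ∈ R'ε, K r ⊆ 𝔾) ∧
      (∀ r : R, ∃ t ∈ R'ε, dist t r < ε) ∧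
      (∀ B : Set Y, Metric.diam B ≤ (4 / 5) * ρ * ε →
        {t ∈ R'ε | (K t ∩ B).Nonempty}.Finite) := by
  intro ε hε hεε₀
  set ε' : ℝ := (9 / 10) * ε with hε'def
  have hε' : 0 < ε' := by positivity
  have hε'ε₀ : ε' < ε₀ := by nlinarith
  obtain ⟨Rε, hRεdense, hRεfin⟩ := hfin ε' hε' hε'ε₀
  set η : ℝ := ρ * ε / 20 with hηdef
  have hη : 0 < η := by positivity
  -- for each t choose f t ∈ R' with dist (f t) t < η
  choose f hfR' hfdist using fun t : R => hR'dense t η hη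
  refine ⟨f '' Rε, ?_, ?_, ?_⟩
  · rintro r ⟨t, _, rfl⟩
    exact hR'sub _ (hfR' t)
  · intro r
    obtain ⟨t, htRε, htr⟩ := hRεdense r
    refine ⟨f t, mem_image_of_mem f htRε, ?_⟩
    calc dist (f t) r ≤ dist (f t) t + dist t r := dist_triangle _ _ _
      _ < η + ε' := add_lt_add (hfdist t) htr
      _ < ε := by rw [hηdef, hε'def]; nlinarith
  · intro B hB
    have hS : Metric.diam (cthickening η B) ≤ ρ * ε' := by
      calc Metric.diam (cthickening η B) ≤ Metric.diam B + 2 * η :=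
            diam_cthickening_le B hη.le
        _ ≤ (4 / 5) * ρ * ε + 2 * η := by linarith
        _ ≤ ρ * ε' := by rw [hηdef, hε'def]; nlinarith
    have hfin' := hRεfin (cthickening η B) hS
    apply Set.Finite.subset (hfin'.image f)
    rintro s ⟨⟨t, htRε, rfl⟩, y, hyK, hyB⟩
    refine mem_image_of_mem f ⟨htRε, ?_⟩
    -- K t meets cthickening η B
    have hedist : EMetric.hausdorffEdist (K (f t)) (K t) ≠ ⊤ :=
      hausdorffEdist_ne_top_of_nonempty_of_bounded (hKne _) (hKne _)
        (hKcpt _).isBounded (hKcpt _).isBounded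
    have h1 : infDist y (K t) ≤ η :=
      le_trans (le_trans (infDist_le_hausdorffDist_of_mem hyK hedist)
        (hKdist (f t) t)) (hfdist t).le
    obtain ⟨z, hzK, hzy⟩ := (hKcpt t).exists_infDist_eq_dist (hKne t) y
    refine ⟨z, mem_cthickening_of_dist_le z y η B hyB ?_, hzK⟩
    rw [dist_comm, ← hzy]
    exact h1
end

section
/- In the setting below, let 0 ≤ l < k be integers and r_{k,l} ∈ (0, ρ/10). Then for every (r,w,α) ∈ 𝒯 there is a set R_{k,l} = R_{k,l}(r,w,α) ⊆ 𝒯 such that: (1) for every s ∈ R with K_s ⊆ B̄(K_r, α) there exists (t,v,β) ∈ R_{k,l} with γ(t,s) ≤ (10/ρ)·r_{k,l}·w; (2) if (t,v,β) ∈ R_{k,l} then β = r_{k,l}·w < α/10 and v < ε₀/k; (3) if (t,v,β) ∈ R_{k,l} then B̄(K_t, v) ⊆ 𝔾_k and K_t ⊆ B̄(K_r, 2α); (4) for every B ⊆ Y of diameter at most 8·r_{k,l}·w, the set of (t,v,β) ∈ R_{k,l} with K_t ∩ B ≠ ∅ is finite; (5) there exists v > 0 with (r, v, r_{k,l}·w)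 ∈ R_{k,l}. -/
open Metric Set

/-- A tube triple `(r,w,α) ∈ 𝒯 = {(r,w,α) ∈ R × (0,ε₀) × (0,∞) : K_r ⊆ 𝔾, w ≤ α}`. -/
def TubeTriple {Y R : Type*} [MetricSpace Y] (K : R → Set Y) (𝔾 : Set Y) (ε₀ : ℝ)
    (p : R × ℝ × ℝ) : Prop :=
  K p.1 ⊆ 𝔾 ∧ 0 < p.2.1 ∧ p.2.1 < ε₀ ∧ 0 < p.2.2 ∧ p.2.1 ≤ p.2.2

lemma subset_cthickening_of_hdist {Y : Type*} [MetricSpace Y] {s t : Set Y} {δ : ℝ}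
    (hne : EMetric.hausdorffEdist s t ≠ ⊤) (h : hausdorffDist s t ≤ δ) :
    s ⊆ cthickening δ t := by
  intro x hx
  rw [mem_cthickening_iff]
  calc EMetric.infEdist x t ≤ EMetric.hausdorffEdist s t :=
        EMetric.infEdist_le_hausdorffEdist_of_mem hx
    _ ≤ ENNReal.ofReal δ := by
        rw [← ENNReal.ofReal_toReal hne]
        exact ENNReal.ofReal_le_ofReal h

/-- Lemma 6.2 of the paper: construction of the approximating family
`R_{k,l}(r,w,α)` of tube triples. -/
theorem statement16 {Y R : Type*} [MetricSpace Y] [MetricSpace R]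
    (K : R → Set Y) (hKne : ∀ r, (K r).Nonempty) (hKcpt : ∀ r, IsCompact (K r))
    (hKdist : ∀ r s, hausdorffDist (K r) (K s) ≤ dist r s)
    (ρ ε₀ : ℝ) (hρ : 0 < ρ) (hρ1 : ρ < 1) (hε₀ : 0 < ε₀)
    (G : ℕ → Set Y) (hGopen : ∀ k : ℕ, 1 ≤ k → IsOpen (G k))
    (hGnested : ∀ k : ℕ, 1 ≤ k → G (k + 1) ⊆ G k)
    (𝔾 : Set Y) (h𝔾 : 𝔾 = ⋂ (k : ℕ) (_ : 1 ≤ k), G k)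
    (R' : ℝ → Set R)
    (hR' : ∀ ε : ℝ, 0 < ε → ε < ε₀ →
      (∀ t ∈ R' ε, K t ⊆ 𝔾) ∧
      (∀ r : R, ∃ t ∈ R' ε, dist t r < ε) ∧
      (∀ B : Set Y, Metric.diam B ≤ (4 / 5) * ρ * ε →
        {t ∈ R' ε | (K t ∩ B).Nonempty}.Finite))
    (l k : ℕ) (hlk : l < k)
    (rkl : ℝ) (hrkl : 0 < rkl) (hrkl' : rkl < ρ / 10)
    (r : R) (w α : ℝ) (hT : TubeTriple K 𝔾 ε₀ (r, w, α)) :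
    ∃ Rkl : Set (R × ℝ × ℝ),
      (∀ p ∈ Rkl, TubeTriple K 𝔾 ε₀ p) ∧
      -- (1)
      (∀ s : R, K s ⊆ cthickening α (K r) →
        ∃ p ∈ Rkl, dist p.1 s ≤ (10 / ρ) * rkl * w) ∧
      -- (2)
      (∀ p ∈ Rkl, p.2.2 = rkl * w ∧ rkl * w < α / 10 ∧ p.2.1 < ε₀ / k) ∧
      -- (3)
      (∀ p ∈ Rkl, cthickening p.2.1 (K p.1) ⊆ G k ∧
        K p.1 ⊆ cthickening (2 * α) (K r)) ∧
      -- (4)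
      (∀ B : Set Y, Metric.diam B ≤ 8 * rkl * w →
        {p ∈ Rkl | (K p.1 ∩ B).Nonempty}.Finite) ∧
      -- (5)
      (∃ v : ℝ, 0 < v ∧ (r, v, rkl * w) ∈ Rkl) := by
  obtain ⟨hKr, hw, hwε₀, hα, hwα⟩ := hT
  have hk1 : 1 ≤ k := by omega
  have hk0 : (0:ℝ) < k := by exact_mod_cast Nat.pos_of_ne_zero (by omega)
  set ε := (10 / ρ) * rkl * w with hεdef
  have hε : 0 < ε := by positivity
  have hεw : ε < w := by
    have : (10 / ρ) * rkl < 1 := by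
      rw [div_mul_eq_mul_div, div_lt_one hρ]
      linarith
    nlinarith
  have hεε₀ : ε < ε₀ := hεw.trans hwε₀
  have hεα : ε ≤ α := le_of_lt (hεw.trans_le hwα)
  obtain ⟨h1, h2, h3⟩ := hR' ε hε hεε₀
  have hGk : IsOpen (G k) := hGopen k hk1
  have h𝔾G : 𝔾 ⊆ G k := by
    rw [h𝔾]; exact fun x hx => by simpa using (Set.mem_iInter₂.1 hx k hk1)
  have hrklw : 0 < rkl * w := by positivity
  -- choose radii
  have key : ∀ t : R, K t ⊆ 𝔾 →
      ∃ v, 0 < v ∧ v ≤ rkl * w ∧ v < ε₀ / k ∧ cthickening v (K t) ⊆ G k := by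
    intro t ht
    obtain ⟨δ, hδ, hδsub⟩ := (hKcpt t).exists_cthickening_subset_open hGk (ht.trans h𝔾G)
    refine ⟨min δ (min (rkl * w) (ε₀ / (2 * k))), ?_, ?_, ?_, ?_⟩
    · have : (0:ℝ) < ε₀ / (2 * k) := by positivity
      simp [hδ, hrklw, this]
    · exact (min_le_right _ _).trans (min_le_left _ _)
    · calc min δ (min (rkl * w) (ε₀ / (2 * k))) ≤ ε₀ / (2 * k) :=
          (min_le_right _ _).trans (min_le_right _ _)
        _ < ε₀ / k := by
          apply div_lt_div_of_pos_left hε₀ hk0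
          linarith
    · exact (cthickening_mono (min_le_left _ _) _).trans hδsub
  classical
  let v : R → ℝ := fun t => if h : K t ⊆ 𝔾 then (key t h).choose else 1
  have hv : ∀ t, K t ⊆ 𝔾 → 0 < v t ∧ v t ≤ rkl * w ∧ v t < ε₀ / k ∧
      cthickening (v t) (K t) ⊆ G k := by
    intro t ht
    simp only [v, dif_pos ht]
    exact (key t ht).choose_spec
  set S : Set R := {t ∈ R' ε | K t ⊆ cthickening (2 * α) (K r)} ∪ {r} with hSdef
  have hS𝔾 : ∀ t ∈ S, K t ⊆ 𝔾 := by
    rintro t (⟨ht, -⟩ | rfl)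
    · exact h1 t ht
    · exact hKr
  have hS2α : ∀ t ∈ S, K t ⊆ cthickening (2 * α) (K r) := by
    rintro t (⟨-, ht⟩ | rfl)
    · exact ht
    · exact self_subset_cthickening _
  refine ⟨(fun t => (t, v t, rkl * w)) '' S, ?_, ?_, ?_, ?_, ?_, ?_⟩
  · rintro p ⟨t, htS, rfl⟩
    have h𝔾t := hS𝔾 t htS
    obtain ⟨hv1, hv2, hv3, -⟩ := hv t h𝔾t
    have : rkl * w < ε₀ := by
      have : rkl * w < w := by nlinarith
      linarith
    exact ⟨h𝔾t, hv1, lt_of_lt_of_le hv3 (by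
      apply div_le_self hε₀.le; exact_mod_cast hk1), hrklw, hv2⟩
  · -- (1)
    intro s hs
    obtain ⟨t, htR, htd⟩ := h2 s
    have hne : EMetric.hausdorffEdist (K t) (K s) ≠ ⊤ :=
      Metric.hausdorffEdist_ne_top_of_nonempty_of_bounded (hKne t) (hKne s)
        (hKcpt t).isBounded (hKcpt s).isBounded
    have hsub : K t ⊆ cthickening (2 * α) (K r) := by
      have h1' : K t ⊆ cthickening ε (K s) :=
        subset_cthickening_of_hdist hne ((hKdist t s).trans htd.le)
      have h2' : K t ⊆ cthickening ε (cthickening α (K r)) :=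
        h1'.trans (cthickening_subset_of_subset ε hs)
      refine h2'.trans ((cthickening_cthickening_subset hε.le hα.le _).trans ?_)
      exact cthickening_mono (by linarith) _
    exact ⟨(t, v t, rkl * w), ⟨t, Or.inl ⟨htR, hsub⟩, rfl⟩, htd.le⟩
  · -- (2)
    rintro p ⟨t, htS, rfl⟩
    obtain ⟨-, -, hv3, -⟩ := hv t (hS𝔾 t htS)
    refine ⟨rfl, ?_, hv3⟩
    have : rkl * w ≤ rkl * α := by nlinarith
    nlinarith
  · -- (3)
    rintro p ⟨t, htS, rfl⟩
    obtain ⟨-, -, -, hv4⟩ := hv t (hS𝔾 t htS)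
    exact ⟨hv4, hS2α t htS⟩
  · -- (4)
    intro B hB
    have hB' : Metric.diam B ≤ (4 / 5) * ρ * ε := by
      rw [hεdef]
      have : (4 / 5) * ρ * ((10 / ρ) * rkl * w) = 8 * rkl * w := by
        field_simp; ring
      linarith [this ▸ hB]
    have hfin : ({t ∈ R' ε | (K t ∩ B).Nonempty} ∪ {r}).Finite :=
      (h3 B hB').union (finite_singleton r)
    apply (hfin.image (fun t => (t, v t, rkl * w))).subset
    rintro p ⟨⟨t, htS, rfl⟩, hpB⟩
    refine ⟨t, ?_, rfl⟩
    rcases htS with ⟨ht, -⟩ | rfl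
    · exact Or.inl ⟨ht, hpB⟩
    · exact Or.inr rfl
  · -- (5)
    exact ⟨v r, (hv r hKr).1, ⟨r, Or.inr rfl, rfl⟩⟩
end

section
/- In the setting below, for every y ∈ Y and every integer k ≥ 0 there exists δ_k = δ_k(y) > 0 such that the set F_k(y) := {(r,w,α) ∈ R_k : d(y, K_r) ≤ δ_k + 3α} is finite. -/
open Metric Set

/-- Lemma 6.3 of the paper: local finiteness of the levels `R_k` of the
tube construction. -/
theorem statement17 {Y R : Type*} [MetricSpace Y] [MetricSpace R]
    (K : R → Set Y) (hKne : ∀ r, (K r).Nonempty) (hKcpt : ∀ r, IsCompact (K r))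
    (hKdist : ∀ r s, hausdorffDist (K r) (K s) ≤ dist r s)
    (ρ ε₀ : ℝ) (hρ : 0 < ρ) (hρ1 : ρ < 1) (hε₀ : 0 < ε₀)
    (G : ℕ → Set Y) (hGopen : ∀ k : ℕ, 1 ≤ k → IsOpen (G k))
    (hGnested : ∀ k : ℕ, 1 ≤ k → G (k + 1) ⊆ G k)
    (𝔾 : Set Y) (h𝔾 : 𝔾 = ⋂ (k : ℕ) (_ : 1 ≤ k), G k)
    (rkl : ℕ → ℕ → ℝ)
    (hrkl : ∀ k l : ℕ, l < k → 0 < rkl k l ∧ rkl k l < ρ / 10)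
    (p₀ : R × ℝ × ℝ) (hp₀ : TubeTriple K 𝔾 ε₀ p₀)
    (Rkl : ℕ → ℕ → (R × ℝ × ℝ) → Set (R × ℝ × ℝ))
    (hRklT : ∀ (k l : ℕ) (p : R × ℝ × ℝ), l < k → TubeTriple K 𝔾 ε₀ p →
      ∀ q ∈ Rkl k l p, TubeTriple K 𝔾 ε₀ q)
    -- property (2)
    (hRkl2 : ∀ (k l : ℕ) (p : R × ℝ × ℝ), l < k → TubeTriple K 𝔾 ε₀ p →
      ∀ q ∈ Rkl k l p,
        q.2.2 = rkl k l * p.2.1 ∧ rkl k l * p.2.1 < p.2.2 / 10 ∧ q.2.1 < ε₀ / k)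
    -- property (3)
    (hRkl3 : ∀ (k l : ℕ) (p : R × ℝ × ℝ), l < k → TubeTriple K 𝔾 ε₀ p →
      ∀ q ∈ Rkl k l p,
        cthickening q.2.1 (K q.1) ⊆ G k ∧ K q.1 ⊆ cthickening (2 * p.2.2) (K p.1))
    -- property (4)
    (hRkl4 : ∀ (k l : ℕ) (p : R × ℝ × ℝ), l < k → TubeTriple K 𝔾 ε₀ p →
      ∀ B : Set Y, Metric.diam B ≤ 8 * rkl k l * p.2.1 →
        {q ∈ Rkl k l p | (K q.1 ∩ B).Nonempty}.Finite)
    (Rk : ℕ → Set (R × ℝ × ℝ))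
    (hRk0 : Rk 0 = {p₀})
    (hRkrec : ∀ k : ℕ, 1 ≤ k →
      Rk k = ⋃ (l : ℕ) (_ : l < k), ⋃ p ∈ Rk l, Rkl k l p) :
    ∀ (y : Y) (k : ℕ), ∃ δ > (0:ℝ),
      {p ∈ Rk k | infDist y (K p.1) ≤ δ + 3 * p.2.2}.Finite := by
  classical
  -- All members of `Rk k` are tube triples.
  have hT : ∀ k, ∀ p ∈ Rk k, TubeTriple K 𝔾 ε₀ p := by
    intro k
    induction k using Nat.strong_induction_on with
    | _ k ih =>
      rcases Nat.eq_zero_or_pos k with rfl | hk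
      · intro p hp; rw [hRk0] at hp
        rw [Set.mem_singleton_iff] at hp; subst hp; exact hp₀
      · intro p hp
        rw [hRkrec k hk] at hp
        simp only [Set.mem_iUnion] at hp
        obtain ⟨l, hl, q, hq, hpq⟩ := hp
        exact hRklT k l q hl (ih l hl q hq) p hpq
  intro y k
  induction k using Nat.strong_induction_on with
  | _ k ih =>
    rcases Nat.eq_zero_or_pos k with rfl | hk
    · refine ⟨1, one_pos, (Set.finite_singleton p₀).subset ?_⟩
      intro p hp; rw [← hRk0]; exact hp.1
    · -- choose the δ's from the induction hypothesis, totalized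
      have ih' : ∀ l, ∃ δ > (0:ℝ), l < k →
          {p ∈ Rk l | infDist y (K p.1) ≤ δ + 3 * p.2.2}.Finite := by
        intro l
        by_cases hl : l < k
        · obtain ⟨δ, hδ, hfin⟩ := ih l hl; exact ⟨δ, hδ, fun _ => hfin⟩
        · exact ⟨1, one_pos, fun h => absurd h hl⟩
      choose δ hδpos hδfin using ih'
      set F : ℕ → Set (R × ℝ × ℝ) :=
        fun l => {p ∈ Rk l | infDist y (K p.1) ≤ δ l + 3 * p.2.2} with hF
      -- the finite collection of positive numbers we must stay below
      have hvals : ∀ l, l < k → ∃ t : Finset ℝ,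
          (δ l ∈ t) ∧ (∀ p ∈ F l, rkl k l * p.2.1 ∈ t) ∧ (∀ x ∈ t, 0 < x) := by
        intro l hl
        refine ⟨insert (δ l) ((hδfin l hl).toFinset.image (fun p => rkl k l * p.2.1)),
          Finset.mem_insert_self _ _, ?_, ?_⟩
        · intro p hp
          exact Finset.mem_insert_of_mem (Finset.mem_image.mpr
            ⟨p, (hδfin l hl).mem_toFinset.mpr hp, rfl⟩)
        · intro x hx
          rcases Finset.mem_insert.mp hx with rfl | hx
          · exact hδpos l
          · obtain ⟨p, hp, rfl⟩ := Finset.mem_image.mp hx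
            have hp' := (hδfin l hl).mem_toFinset.mp hp
            have hTp := hT l p hp'.1
            exact mul_pos (hrkl k l hl).1 hTp.2.1
      choose t ht1 ht2 ht3 using hvals
      -- total union of these finsets
      have hkm : k - 1 < k := Nat.sub_lt hk one_pos
      set T : Finset ℝ := (Finset.range k).attach.biUnion
        (fun l => t l.1 (Finset.mem_range.mp l.2)) with hTdef
      have hTne : T.Nonempty :=
        ⟨δ (k-1), Finset.mem_biUnion.mpr ⟨⟨k-1, Finset.mem_range.mpr hkm⟩,
          Finset.mem_attach _ _, ht1 _ _⟩⟩
      set ε : ℝ := T.min' hTne with hε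
      have hεmem := T.min'_mem hTne
      have hεpos : 0 < ε := by
        obtain ⟨⟨l, hl⟩, -, hmem⟩ := Finset.mem_biUnion.mp hεmem
        exact ht3 l _ _ hmem
      have hεle : ∀ l (hl : l < k), ∀ x ∈ t l hl, ε ≤ x := by
        intro l hl x hx
        exact T.min'_le x (Finset.mem_biUnion.mpr
          ⟨⟨l, Finset.mem_range.mpr hl⟩, Finset.mem_attach _ _, hx⟩)
      refine ⟨ε, hεpos, ?_⟩
      -- the covering family of finite sets
      have hcov : {p ∈ Rk k | infDist y (K p.1) ≤ ε + 3 * p.2.2} ⊆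
          ⋃ (l : ℕ) (_ : l < k), ⋃ p ∈ F l,
            {q ∈ Rkl k l p | (K q.1 ∩ closedBall y (4 * (rkl k l * p.2.1))).Nonempty} := by
        rintro q ⟨hqk, hqd⟩
        rw [hRkrec k hk] at hqk
        simp only [Set.mem_iUnion] at hqk
        obtain ⟨l, hl, p, hp, hq⟩ := hqk
        have hTp := hT l p hp
        obtain ⟨hβ, hβα, -⟩ := hRkl2 k l p hl hTp q hq
        obtain ⟨-, hK3⟩ := hRkl3 k l p hl hTp q hq
        have hw : 0 < p.2.1 := hTp.2.1
        have hα : 0 < p.2.2 := hTp.2.2.2.1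
        have hβpos : 0 < rkl k l * p.2.1 := mul_pos (hrkl k l hl).1 hw
        -- a closest point of K q.1 to y
        obtain ⟨x, hxK, hxd⟩ := (hKcpt q.1).exists_infDist_eq_dist (hKne q.1) y
        have hxle : dist y x ≤ ε + 3 * (rkl k l * p.2.1) := by
          rw [← hxd]; rw [hβ] at hqd; exact hqd
        -- p belongs to F l
        have hxcl : infDist x (K p.1) ≤ 2 * p.2.2 := by
          have hx' := hK3 hxK
          rw [Metric.mem_cthickening_iff] at hx'
          rw [Metric.infDist, ← ENNReal.toReal_ofReal (by positivity : (0:ℝ) ≤ 2 * p.2.2)]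
          exact ENNReal.toReal_mono ENNReal.ofReal_ne_top hx'
        have hεδ : ε ≤ δ l := hεle l hl _ (ht1 l hl)
        have hpF : p ∈ F l := by
          refine ⟨hp, ?_⟩
          have h1 : infDist y (K p.1) ≤ infDist x (K p.1) + dist y x :=
            Metric.infDist_le_infDist_add_dist
          have h3β : 3 * (rkl k l * p.2.1) ≤ p.2.2 := by nlinarith
          calc infDist y (K p.1) ≤ 2 * p.2.2 + (ε + 3 * (rkl k l * p.2.1)) := by
                linarith
            _ ≤ δ l + 3 * p.2.2 := by linarith
        have hεβ : ε ≤ rkl k l * p.2.1 := hεle l hl _ (ht2 l hl p hpF)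
        refine Set.mem_iUnion.mpr ⟨l, Set.mem_iUnion.mpr ⟨hl,
          Set.mem_iUnion.mpr ⟨p, Set.mem_iUnion.mpr ⟨hpF, hq, ⟨x, hxK, ?_⟩⟩⟩⟩⟩
        rw [Metric.mem_closedBall, dist_comm]
        linarith
      refine Set.Finite.subset ?_ hcov
      refine Set.Finite.biUnion (Set.finite_Iio k) ?_
      intro l hl
      refine Set.Finite.biUnion (hδfin l hl) ?_
      intro p hp
      refine hRkl4 k l p hl (hT l p hp.1) _ ?_
      calc Metric.diam (closedBall y (4 * (rkl k l * p.2.1)))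
          ≤ 2 * (4 * (rkl k l * p.2.1)) := by
            apply Metric.diam_closedBall
            have hw : 0 < p.2.1 := (hT l p hp.1).2.1
            have hr := (hrkl k l hl).1
            positivity
        _ = 8 * rkl k l * p.2.1 := by ring
end

section
/- In the setting below, for every integer k ≥ 1 and every λ ∈ [0,1], the set M_k(λ) is a closed subset of (Y,d). -/
open Metric Set

/-- The set `M_k(λ,w)` of Definition 6.4 of the paper: points `y` admitting a chain of
levels `0 = l₀ < l₁ < ⋯ < l_n = k` and tube triples `(r_m,w_m,α_m) ∈ R_{l_m}` with
`(r_m,w_m,α_m) ∈ R_{l_m,l_{m−1}}(r_{m−1},w_{m−1},α_{m−1})`, `d(y,K_{r_m}) ≤ λα_m`,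
`d(y,K_{r_n}) ≤ λw_n` and `w_n = w`. -/
def Mkw {Y R : Type*} [MetricSpace Y] (K : R → Set Y)
    (Rk : ℕ → Set (R × ℝ × ℝ)) (Rkl : ℕ → ℕ → (R × ℝ × ℝ) → Set (R × ℝ × ℝ))
    (k : ℕ) (lam w : ℝ) : Set Y :=
  {y | ∃ n : ℕ, 1 ≤ n ∧ ∃ (l : ℕ → ℕ) (trip : ℕ → R × ℝ × ℝ),
    l 0 = 0 ∧ l n = k ∧ (∀ m : ℕ, m < n → l m < l (m + 1)) ∧
    (∀ m : ℕ, m ≤ n → trip m ∈ Rk (l m)) ∧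
    (∀ m : ℕ, 1 ≤ m → m ≤ n → trip m ∈ Rkl (l m) (l (m - 1)) (trip (m - 1))) ∧
    (∀ m : ℕ, m ≤ n → infDist y (K (trip m).1) ≤ lam * (trip m).2.2) ∧
    infDist y (K (trip n).1) ≤ lam * (trip n).2.1 ∧
    (trip n).2.1 = w}

/-- `M_k(λ) = ⋃_{w>0} M_k(λ,w)`. -/
def Mk {Y R : Type*} [MetricSpace Y] (K : R → Set Y)
    (Rk : ℕ → Set (R × ℝ × ℝ)) (Rkl : ℕ → ℕ → (R × ℝ × ℝ) → Set (R × ℝ × ℝ))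
    (k : ℕ) (lam : ℝ) : Set Y :=
  {y | ∃ w : ℝ, 0 < w ∧ y ∈ Mkw K Rk Rkl k lam w}

/-- Chains from level `l` with initial triple `p`, reaching level `k`. -/
def EE {Y R : Type*} [MetricSpace Y] (K : R → Set Y)
    (Rkl : ℕ → ℕ → (R × ℝ × ℝ) → Set (R × ℝ × ℝ))
    (lam : ℝ) (k l : ℕ) (p : R × ℝ × ℝ) : Set Y :=
  {y | ∃ (n : ℕ) (ls : ℕ → ℕ) (trip : ℕ → R × ℝ × ℝ),
    ls 0 = l ∧ ls n = k ∧ trip 0 = p ∧ (∀ m : ℕ, m < n → ls m < ls (m + 1)) ∧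
    (∀ m : ℕ, 1 ≤ m → m ≤ n → trip m ∈ Rkl (ls m) (ls (m - 1)) (trip (m - 1))) ∧
    (∀ m : ℕ, m ≤ n → infDist y (K (trip m).1) ≤ lam * (trip m).2.2) ∧
    infDist y (K (trip n).1) ≤ lam * (trip n).2.1}

lemma chain_mono {ls : ℕ → ℕ} {n : ℕ} (h : ∀ m : ℕ, m < n → ls m < ls (m + 1)) :
    ∀ a b : ℕ, a ≤ b → b ≤ n → ls a ≤ ls b := by
  intro a b hab
  induction b, hab using Nat.le_induction with
  | base => intro _; exact le_rfl
  | succ b hab ih =>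
    intro hbn
    exact le_trans (ih (by omega)) (le_of_lt (h b (by omega)))


def consFun {α : Type*} (a : α) (f : ℕ → α) : ℕ → α
  | 0 => a
  | (m + 1) => f m

@[simp] lemma consFun_zero {α : Type*} (a : α) (f : ℕ → α) : consFun a f 0 = a := rfl

@[simp] lemma consFun_succ {α : Type*} (a : α) (f : ℕ → α) (m : ℕ) :
    consFun a f (m + 1) = f m := rfl

lemma EE_closed {Y R : Type*} [MetricSpace Y]
    (K : R → Set Y) (hKne : ∀ r, (K r).Nonempty) (hKcpt : ∀ r, IsCompact (K r))
    (ε₀ : ℝ) (𝔾 : Set Y) (rkl : ℕ → ℕ → ℝ)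
    (hrklpos : ∀ k l : ℕ, l < k → 0 < rkl k l)
    (Rkl : ℕ → ℕ → (R × ℝ × ℝ) → Set (R × ℝ × ℝ))
    (hRklT : ∀ (k l : ℕ) (p : R × ℝ × ℝ), l < k → TubeTriple K 𝔾 ε₀ p →
      ∀ q ∈ Rkl k l p, TubeTriple K 𝔾 ε₀ q)
    (hRkl2 : ∀ (k l : ℕ) (p : R × ℝ × ℝ), l < k → TubeTriple K 𝔾 ε₀ p →
      ∀ q ∈ Rkl k l p,
        q.2.2 = rkl k l * p.2.1 ∧ rkl k l * p.2.1 < p.2.2 / 10 ∧ q.2.1 < ε₀ / k)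
    (hRkl4 : ∀ (k l : ℕ) (p : R × ℝ × ℝ), l < k → TubeTriple K 𝔾 ε₀ p →
      ∀ B : Set Y, Metric.diam B ≤ 8 * rkl k l * p.2.1 →
        {q ∈ Rkl k l p | (K q.1 ∩ B).Nonempty}.Finite)
    (lam : ℝ) (hlam0 : 0 ≤ lam) (hlam1 : lam ≤ 1) (k : ℕ) :
    ∀ (d l : ℕ) (p : R × ℝ × ℝ), k - l = d → l ≤ k → TubeTriple K 𝔾 ε₀ p →
      IsClosed (EE K Rkl lam k l p) := by
  intro d
  induction d using Nat.strong_induction_on with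
  | _ d ih =>
  intro l p hd hlk hp
  classical
  by_cases hl : l = k
  · -- base case: l = k, only trivial chains
    subst hl
    have hEq : EE K Rkl lam l l p =
        {y | infDist y (K p.1) ≤ lam * p.2.2} ∩ {y | infDist y (K p.1) ≤ lam * p.2.1} := by
      ext y
      constructor
      · rintro ⟨n, ls, trip, h0, hn, htrip0, hstr, _, hdist, hfin⟩
        have hn0 : n = 0 := by
          by_contra hne
          have h1 : ls 0 < ls 1 := hstr 0 (by omega)
          have h2 : ls 1 ≤ ls n := chain_mono hstr 1 n (by omega) le_rfl
          omega
        subst hn0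
        have h1 := hdist 0 le_rfl
        rw [htrip0] at h1 hfin
        exact ⟨h1, hfin⟩
      · rintro ⟨h1, h2⟩
        refine ⟨0, fun _ => l, fun _ => p, rfl, rfl, rfl, by omega, by omega, ?_, h2⟩
        intro m _; exact h1
    rw [hEq]
    exact (isClosed_le (continuous_infDist_pt _) continuous_const).inter
      (isClosed_le (continuous_infDist_pt _) continuous_const)
  · -- inductive case l < k
    have hlk' : l < k := lt_of_le_of_ne hlk hl
    set T : Set (ℕ × (R × ℝ × ℝ)) :=
      {i | l < i.1 ∧ i.1 ≤ k ∧ i.2 ∈ Rkl i.1 l p} with hT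
    have hEq : EE K Rkl lam k l p =
        {y | infDist y (K p.1) ≤ lam * p.2.2} ∩
          ⋃ i : T, EE K Rkl lam k (i : ℕ × (R × ℝ × ℝ)).1 (i : ℕ × (R × ℝ × ℝ)).2 := by
      ext y
      constructor
      · rintro ⟨n, ls, trip, h0, hn, htrip0, hstr, hmem, hdist, hfin⟩
        have hn1 : 1 ≤ n := by
          rcases Nat.eq_zero_or_pos n with hz | hpos
          · exact absurd (h0.symm.trans (hz ▸ hn)) hl
          · exact hpos
        have hc0 : infDist y (K p.1) ≤ lam * p.2.2 := by
          have := hdist 0 (by omega)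
          rwa [htrip0] at this
        have hl1 : l < ls 1 := h0 ▸ hstr 0 (by omega)
        have hl1k : ls 1 ≤ k := hn ▸ chain_mono hstr 1 n hn1 le_rfl
        have hq : trip 1 ∈ Rkl (ls 1) l p := by
          have := hmem 1 le_rfl hn1
          simpa [h0, htrip0] using this
        refine ⟨hc0, mem_iUnion.mpr ⟨⟨(ls 1, trip 1), hl1, hl1k, hq⟩, ?_⟩⟩
        refine ⟨n - 1, fun m => ls (m + 1), fun m => trip (m + 1), rfl, ?_, rfl,
          ?_, ?_, ?_, ?_⟩
        · show ls (n - 1 + 1) = k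
          have he : n - 1 + 1 = n := by omega
          rw [he]; exact hn
        · intro m hm; exact hstr (m + 1) (by omega)
        · intro m hm1 hmn
          have := hmem (m + 1) (by omega) (by omega)
          have he : m - 1 + 1 = m := by omega
          simpa [he] using this
        · intro m hm; exact hdist (m + 1) (by omega)
        · show infDist y (K (trip (n - 1 + 1)).1) ≤ lam * (trip (n - 1 + 1)).2.1
          have he : n - 1 + 1 = n := by omega
          rw [he]; exact hfin
      · rintro ⟨hc0, hU⟩
        obtain ⟨⟨⟨l', q⟩, hcond⟩, hFi⟩ := mem_iUnion.mp hU
        obtain ⟨n, ls, trip, h0, hn, htrip0, hstr, hmem, hdist, hfin⟩ := hFi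
        refine ⟨n + 1, consFun l ls, consFun p trip,
          rfl, hn, rfl, ?_, ?_, ?_, hfin⟩
        · intro m hm
          cases m with
          | zero => simpa [h0] using hcond.1
          | succ m => exact hstr m (by omega)
        · intro m hm1 hmn
          cases m with
          | zero => omega
          | succ m =>
            cases m with
            | zero => simpa [h0, htrip0] using hcond.2.2
            | succ m =>
              have := hmem (m + 1) (by omega) (by omega)
              simpa using this
        · intro m hm
          cases m with
          | zero => exact hc0
          | succ m => exact hdist m (by omega)
    rw [hEq]
    refine (isClosed_le (continuous_infDist_pt _) continuous_const).inter ?_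
    have hclosed : ∀ i : T, IsClosed (EE K Rkl lam k (i : ℕ × (R × ℝ × ℝ)).1
        (i : ℕ × (R × ℝ × ℝ)).2) := by
      rintro ⟨⟨l', q⟩, hcond⟩
      have h1 : l < l' := hcond.1
      have h2 : l' ≤ k := hcond.2.1
      exact ih (k - l') (by omega) l' q rfl h2
        (hRklT l' l p h1 hp q hcond.2.2)
    refine LocallyFinite.isClosed_iUnion ?_ hclosed
    intro y
    -- local finiteness at y
    have hIoc : (Finset.Ioc l k).Nonempty := Finset.nonempty_Ioc.mpr hlk'
    set δ : ℝ := (Finset.Ioc l k).inf' hIoc (fun l' => rkl l' l * p.2.1) with hδ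
    have hβpos : ∀ l' ∈ Finset.Ioc l k, 0 < rkl l' l * p.2.1 := by
      intro l' hl'
      rw [Finset.mem_Ioc] at hl'
      exact mul_pos (hrklpos l' l hl'.1) hp.2.1
    have hδpos : 0 < δ := by
      rw [hδ, Finset.lt_inf'_iff]
      exact hβpos
    refine ⟨ball y δ, ball_mem_nhds y hδpos, ?_⟩
    have hSfin : ({j : ℕ × (R × ℝ × ℝ) |
        j ∈ T ∧ (EE K Rkl lam k j.1 j.2 ∩ ball y δ).Nonempty}).Finite := by
      have hsub : {j : ℕ × (R × ℝ × ℝ) |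
          j ∈ T ∧ (EE K Rkl lam k j.1 j.2 ∩ ball y δ).Nonempty} ⊆
          ⋃ l' ∈ (Finset.Ioc l k : Set ℕ),
            (fun q => ((l' : ℕ), q)) ''
              {q ∈ Rkl l' l p |
                (K q.1 ∩ closedBall y (2 * (rkl l' l * p.2.1))).Nonempty} := by
        rintro ⟨l', q⟩ ⟨hcond, y', hy'F, hy'b⟩
        obtain ⟨n, ls, trip, h0, hn, htrip0, hstr, hmem, hdist, hfin⟩ := hy'F
        have hq22 : q.2.2 = rkl l' l * p.2.1 :=
          (hRkl2 l' l p hcond.1 hp q hcond.2.2).1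
        set β := rkl l' l * p.2.1 with hβ
        have hmemIoc : l' ∈ Finset.Ioc l k := Finset.mem_Ioc.mpr ⟨hcond.1, hcond.2.1⟩
        have hβpos' : 0 < β := hβpos l' hmemIoc
        have hd1 : infDist y' (K q.1) ≤ β := by
          have h2 := hdist 0 (by omega)
          rw [htrip0, hq22] at h2
          calc infDist y' (K q.1) ≤ lam * β := h2
            _ ≤ 1 * β := mul_le_mul_of_nonneg_right hlam1 hβpos'.le
            _ = β := one_mul β
        have hd2 : infDist y (K q.1) ≤ 2 * β := by
          have h3 := infDist_le_infDist_add_dist (x := y) (y := y') (s := K q.1)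
          have hδβ : δ ≤ β := Finset.inf'_le _ hmemIoc
          have hdy : dist y y' < δ := by
            rw [dist_comm]; exact mem_ball.mp hy'b
          nlinarith
        obtain ⟨z, hz, hzeq⟩ := (hKcpt q.1).exists_infDist_eq_dist (hKne q.1) y
        refine mem_iUnion₂.mpr ⟨l', Finset.mem_coe.mpr hmemIoc,
          ⟨q, ⟨hcond.2.2, ⟨z, hz, ?_⟩⟩, rfl⟩⟩
        rw [mem_closedBall, dist_comm]
        rw [hzeq] at hd2
        exact hd2
      refine Set.Finite.subset ?_ hsub
      refine Set.Finite.biUnion (Finset.Ioc l k).finite_toSet ?_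
      intro l' hl'
      rw [Finset.mem_coe, Finset.mem_Ioc] at hl'
      refine Set.Finite.image _ ?_
      refine hRkl4 l' l p hl'.1 hp _ ?_
      have hr : 0 < rkl l' l * p.2.1 := mul_pos (hrklpos l' l hl'.1) hp.2.1
      calc Metric.diam (closedBall y (2 * (rkl l' l * p.2.1)))
          ≤ 2 * (2 * (rkl l' l * p.2.1)) := diam_closedBall (by positivity)
        _ ≤ 8 * rkl l' l * p.2.1 := by nlinarith
    have : {i : T | (EE K Rkl lam k (i : ℕ × (R × ℝ × ℝ)).1
        (i : ℕ × (R × ℝ × ℝ)).2 ∩ ball y δ).Nonempty} ⊆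
        (Subtype.val : T → ℕ × (R × ℝ × ℝ)) ⁻¹'
          {j : ℕ × (R × ℝ × ℝ) |
            j ∈ T ∧ (EE K Rkl lam k j.1 j.2 ∩ ball y δ).Nonempty} := by
      rintro ⟨j, hj⟩ hne
      exact ⟨hj, hne⟩
    exact Set.Finite.subset
      (Set.Finite.preimage (Subtype.val_injective.injOn) hSfin) this

lemma Mk_eq_EE {Y R : Type*} [MetricSpace Y]
    (K : R → Set Y) (ε₀ : ℝ) (𝔾 : Set Y)
    (p₀ : R × ℝ × ℝ) (hp₀ : TubeTriple K 𝔾 ε₀ p₀)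
    (Rkl : ℕ → ℕ → (R × ℝ × ℝ) → Set (R × ℝ × ℝ))
    (hRklT : ∀ (k l : ℕ) (p : R × ℝ × ℝ), l < k → TubeTriple K 𝔾 ε₀ p →
      ∀ q ∈ Rkl k l p, TubeTriple K 𝔾 ε₀ q)
    (Rk : ℕ → Set (R × ℝ × ℝ))
    (hRk0 : Rk 0 = {p₀})
    (hRkrec : ∀ k : ℕ, 1 ≤ k →
      Rk k = ⋃ (l : ℕ) (_ : l < k), ⋃ p ∈ Rk l, Rkl k l p)
    (lam : ℝ) (k : ℕ) (hk : 1 ≤ k) :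
    Mk K Rk Rkl k lam = EE K Rkl lam k 0 p₀ := by
  ext y
  constructor
  · rintro ⟨w, hw, n, hn1, ls, trip, h0, hn, hstr, hmemRk, hmem, hdist, hfin, hwn⟩
    have htrip0 : trip 0 = p₀ := by
      have := hmemRk 0 (by omega)
      rw [h0, hRk0] at this
      simpa using this
    exact ⟨n, ls, trip, h0, hn, htrip0, hstr, hmem, hdist, hfin⟩
  · rintro ⟨n, ls, trip, h0, hn, htrip0, hstr, hmem, hdist, hfin⟩
    have hinv : ∀ m : ℕ, m ≤ n → trip m ∈ Rk (ls m) ∧ TubeTriple K 𝔾 ε₀ (trip m) := by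
      intro m
      induction m with
      | zero =>
        intro _
        rw [h0, htrip0, hRk0]
        exact ⟨rfl, hp₀⟩
      | succ m ihm =>
        intro hm
        obtain ⟨hRkm, hTm⟩ := ihm (by omega)
        have hlt : ls m < ls (m + 1) := hstr m (by omega)
        have hq : trip (m + 1) ∈ Rkl (ls (m + 1)) (ls m) (trip m) := by
          have := hmem (m + 1) (by omega) hm
          simpa using this
        refine ⟨?_, hRklT (ls (m + 1)) (ls m) (trip m) hlt hTm (trip (m + 1)) hq⟩
        rw [hRkrec (ls (m + 1)) (by omega)]
        exact mem_iUnion₂.mpr ⟨ls m, hlt, mem_iUnion₂.mpr ⟨trip m, hRkm, hq⟩⟩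
    have hn1 : 1 ≤ n := by
      rcases Nat.eq_zero_or_pos n with hz | hpos
      · have : (0 : ℕ) = k := by rw [← h0, ← hn, hz]
        omega
      · exact hpos
    exact ⟨(trip n).2.1, (hinv n le_rfl).2.2.1, n, hn1, ls, trip, h0, hn, hstr,
      fun m hm => (hinv m hm).1, hmem, hdist, hfin, rfl⟩

/-- Lemma 6.5 of the paper: each `M_k(λ)` is closed. -/
theorem statement18 {Y R : Type*} [MetricSpace Y] [MetricSpace R]
    (K : R → Set Y) (hKne : ∀ r, (K r).Nonempty) (hKcpt : ∀ r, IsCompact (K r))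
    (hKdist : ∀ r s, hausdorffDist (K r) (K s) ≤ dist r s)
    (ρ ε₀ : ℝ) (hρ : 0 < ρ) (hρ1 : ρ < 1) (hε₀ : 0 < ε₀)
    (G : ℕ → Set Y) (hGopen : ∀ k : ℕ, 1 ≤ k → IsOpen (G k))
    (hGnested : ∀ k : ℕ, 1 ≤ k → G (k + 1) ⊆ G k)
    (𝔾 : Set Y) (h𝔾 : 𝔾 = ⋂ (k : ℕ) (_ : 1 ≤ k), G k)
    (rkl : ℕ → ℕ → ℝ)
    (hrkl : ∀ k l : ℕ, l < k → 0 < rkl k l ∧ rkl k l < ρ / 10)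
    (p₀ : R × ℝ × ℝ) (hp₀ : TubeTriple K 𝔾 ε₀ p₀)
    (Rkl : ℕ → ℕ → (R × ℝ × ℝ) → Set (R × ℝ × ℝ))
    (hRklT : ∀ (k l : ℕ) (p : R × ℝ × ℝ), l < k → TubeTriple K 𝔾 ε₀ p →
      ∀ q ∈ Rkl k l p, TubeTriple K 𝔾 ε₀ q)
    (hRkl2 : ∀ (k l : ℕ) (p : R × ℝ × ℝ), l < k → TubeTriple K 𝔾 ε₀ p →
      ∀ q ∈ Rkl k l p,
        q.2.2 = rkl k l * p.2.1 ∧ rkl k l * p.2.1 < p.2.2 / 10 ∧ q.2.1 < ε₀ / k)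
    (hRkl3 : ∀ (k l : ℕ) (p : R × ℝ × ℝ), l < k → TubeTriple K 𝔾 ε₀ p →
      ∀ q ∈ Rkl k l p,
        cthickening q.2.1 (K q.1) ⊆ G k ∧ K q.1 ⊆ cthickening (2 * p.2.2) (K p.1))
    (hRkl4 : ∀ (k l : ℕ) (p : R × ℝ × ℝ), l < k → TubeTriple K 𝔾 ε₀ p →
      ∀ B : Set Y, Metric.diam B ≤ 8 * rkl k l * p.2.1 →
        {q ∈ Rkl k l p | (K q.1 ∩ B).Nonempty}.Finite)
    (Rk : ℕ → Set (R × ℝ × ℝ))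
    (hRk0 : Rk 0 = {p₀})
    (hRkrec : ∀ k : ℕ, 1 ≤ k →
      Rk k = ⋃ (l : ℕ) (_ : l < k), ⋃ p ∈ Rk l, Rkl k l p) :
    ∀ k : ℕ, 1 ≤ k → ∀ lam : ℝ, 0 ≤ lam → lam ≤ 1 →
      IsClosed (Mk K Rk Rkl k lam) := by
  intro k hk lam hlam0 hlam1
  rw [Mk_eq_EE K ε₀ 𝔾 p₀ hp₀ Rkl hRklT Rk hRk0 hRkrec lam k hk]
  exact EE_closed K hKne hKcpt ε₀ 𝔾 rkl (fun a b h => (hrkl a b h).1) Rkl hRklT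
    hRkl2 hRkl4 lam hlam0 hlam1 k (k - 0) 0 p₀ rfl (by omega) hp₀
end

section
/- In the setting below (with the additional constraints r_{k+1,k} ≤ 1/k and r_{k+1,l} ≤ r_{l',l}/k whenever 0 ≤ l < l' ≤ k), suppose k ≥ 1, 0 ≤ λ < λ+ψ ≤ 1, w > 0, ε ∈ (0,1) and y ∈ M_k(λ,w). Then: (1) the closed ball B̄(y, ψw) is contained in M_k(λ+ψ, w); and (2) if 2δ ∈ (ψw, ψα₀) and 20/(ρψk) < ε < 1, then for each s ∈ R with K_s ⊆ B̄(y,δ) there exists t ∈ R with γ(t,s) < εδ and K_t ⊆ M_{k+j}(λ+ψ) for all j ≥ 1. -/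
open Metric Set

open Function

/-!
Along a chain witnessing `y ∈ M_k(λ,w)` the radii `α_m` decrease while all of them stay `≥ w`,
so moving `y` by `ψw` costs at most `ψα_m` in each defining inequality; this is (1).
For (2), cut the chain at the last index `M` with `2δ ≤ ψα_M`. Then `K_s` lies in
`B̄(K_{r_M}, α_M)`, so property (1) of the families `R_{k+1,l}` yields a child `t` of the
`M`-th triple at level `k+1` with `γ(t,s) ≤ (10/ρ) r_{k+1,l_M} w_M`. The constraints on the
`r_{k,l}` bound this by `10A/(ρk)`, where `A` is `w` (if `M = n`) or `α_{M+1}` (otherwise), and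
in either case `ψA < 2δ`. Every point of `K_t` is then `2δ ≤ ψα_M`-close to `y`, so appending
`t` (and, for `j ≥ 2`, its copy from property (5) at level `k+j`) to the cut chain witnesses
`K_t ⊆ M_{k+j}(λ+ψ)`.
-/

section Metric

variable {X : Type*} [PseudoMetricSpace X]

theorem closedBall_subset_cthickening_of_infDist_add_le {s : Set X} {y : X} {δ a : ℝ}
    (hs : s.Nonempty) (h : infDist y s + δ ≤ a) : closedBall y δ ⊆ cthickening a s := by
  intro x hx
  rw [mem_cthickening_iff, ← ENNReal.ofReal_toReal (infEDist_ne_top hs)]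
  refine ENNReal.ofReal_le_ofReal ((infDist_le_infDist_add_dist (y := y)).trans ?_)
  linarith [mem_closedBall.1 hx]

theorem infDist_le_of_mem_of_hausdorffDist_lt {s t u : Set X} {x y : X} {δ : ℝ}
    (hfin : hausdorffEDist s t ≠ ⊤) (hx : x ∈ s) (hst : hausdorffDist s t < δ)
    (ht : t ⊆ closedBall y δ) : infDist x u ≤ infDist y u + 2 * δ := by
  obtain ⟨x', hx', hxx'⟩ := exists_dist_lt_of_hausdorffDist_lt hx hst hfin
  have hx'y : dist x' y ≤ δ := mem_closedBall.1 (ht hx')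
  calc infDist x u ≤ infDist x' u + dist x x' := infDist_le_infDist_add_dist
    _ ≤ infDist y u + dist x' y + dist x x' := by gcongr; exact infDist_le_infDist_add_dist
    _ ≤ infDist y u + 2 * δ := by linarith

end Metric

theorem exists_greatest_le_of_zero {P : ℕ → Prop} (n : ℕ) (h0 : P 0) :
    ∃ M ≤ n, P M ∧ (M < n → ¬P (M + 1)) := by
  classical
  exact ⟨Nat.findGreatest P n, Nat.findGreatest_le n, Nat.findGreatest_spec (Nat.zero_le n) h0,
    fun h ↦ Nat.findGreatest_is_greatest (Nat.lt_succ_self _) h⟩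

section Chains

variable {Y R : Type*} [MetricSpace Y] {K : R → Set Y} {𝔾 : Set Y} {ε₀ : ℝ}
  {Rk : ℕ → Set (R × ℝ × ℝ)} {Rkl : ℕ → ℕ → (R × ℝ × ℝ) → Set (R × ℝ × ℝ)}

theorem mem_Rk_of_mem_Rkl
    (hRkrec : ∀ k : ℕ, 1 ≤ k → Rk k = ⋃ (l : ℕ) (_ : l < k), ⋃ p ∈ Rk l, Rkl k l p)
    {k l : ℕ} {p q : R × ℝ × ℝ} (hlk : l < k) (hp : p ∈ Rk l) (hq : q ∈ Rkl k l p) :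
    q ∈ Rk k := by
  rw [hRkrec k (by omega)]
  exact mem_biUnion hlk (mem_biUnion hp hq)

theorem tubeTriple_of_mem_Rk {p₀ : R × ℝ × ℝ} (hp₀ : TubeTriple K 𝔾 ε₀ p₀)
    (hRklT : ∀ (k l : ℕ) (p : R × ℝ × ℝ), l < k → TubeTriple K 𝔾 ε₀ p →
      ∀ q ∈ Rkl k l p, TubeTriple K 𝔾 ε₀ q)
    (hRk0 : Rk 0 = {p₀})
    (hRkrec : ∀ k : ℕ, 1 ≤ k → Rk k = ⋃ (l : ℕ) (_ : l < k), ⋃ p ∈ Rk l, Rkl k l p)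
    (j : ℕ) : ∀ q ∈ Rk j, TubeTriple K 𝔾 ε₀ q := by
  induction j using Nat.strong_induction_on with
  | _ j ih =>
    intro q hq
    rcases Nat.eq_zero_or_pos j with rfl | hj
    · rw [hRk0, mem_singleton_iff] at hq
      rwa [hq]
    · rw [hRkrec j hj] at hq
      simp only [mem_iUnion, exists_prop] at hq
      obtain ⟨l, hl, p, hp, hq⟩ := hq
      exact hRklT j l p hl (ih l hl p hp) q hq

/-- The chains `(l_m, (r_m, w_m, α_m))_{m ≤ n}` of Definition 6.4. -/
structure IsTubeChain (Rk : ℕ → Set (R × ℝ × ℝ))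
    (Rkl : ℕ → ℕ → (R × ℝ × ℝ) → Set (R × ℝ × ℝ))
    (n : ℕ) (l : ℕ → ℕ) (trip : ℕ → R × ℝ × ℝ) : Prop where
  level_zero : l 0 = 0
  level_lt : ∀ m < n, l m < l (m + 1)
  mem_Rk : ∀ m ≤ n, trip m ∈ Rk (l m)
  mem_Rkl : ∀ m < n, trip (m + 1) ∈ Rkl (l (m + 1)) (l m) (trip m)

theorem mem_Mkw_iff {k : ℕ} {lam w : ℝ} {y : Y} :
    y ∈ Mkw K Rk Rkl k lam w ↔ ∃ n, 1 ≤ n ∧ ∃ l trip, IsTubeChain Rk Rkl n l trip ∧ l n = k ∧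
      (∀ m ≤ n, infDist y (K (trip m).1) ≤ lam * (trip m).2.2) ∧
      infDist y (K (trip n).1) ≤ lam * (trip n).2.1 ∧ (trip n).2.1 = w := by
  constructor
  · rintro ⟨n, hn, l, trip, h0, hln, hlt, hRk, hRkl, hd, hdn, hw⟩
    refine ⟨n, hn, l, trip, ⟨h0, hlt, hRk, fun m hm ↦ ?_⟩, hln, hd, hdn, hw⟩
    simpa using hRkl (m + 1) (by omega) hm
  · rintro ⟨n, hn, l, trip, ⟨h0, hlt, hRk, hRkl⟩, hln, hd, hdn, hw⟩
    refine ⟨n, hn, l, trip, h0, hln, hlt, hRk, fun m hm hmn ↦ ?_, hd, hdn, hw⟩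
    obtain ⟨m, rfl⟩ := Nat.exists_eq_add_of_le' hm
    simpa using hRkl m hmn

namespace IsTubeChain

variable {n : ℕ} {l : ℕ → ℕ} {trip : ℕ → R × ℝ × ℝ}

theorem of_le (hc : IsTubeChain Rk Rkl n l trip) {M : ℕ} (hM : M ≤ n) :
    IsTubeChain Rk Rkl M l trip :=
  ⟨hc.level_zero, fun m hm ↦ hc.level_lt m (by omega), fun m hm ↦ hc.mem_Rk m (by omega),
    fun m hm ↦ hc.mem_Rkl m (by omega)⟩

theorem snoc
    (hRkrec : ∀ k : ℕ, 1 ≤ k → Rk k = ⋃ (l : ℕ) (_ : l < k), ⋃ p ∈ Rk l, Rkl k l p)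
    (hc : IsTubeChain Rk Rkl n l trip) {k : ℕ} {q : R × ℝ × ℝ} (hk : l n < k)
    (hq : q ∈ Rkl k (l n) (trip n)) :
    IsTubeChain Rk Rkl (n + 1) (update l (n + 1) k) (update trip (n + 1) q) := by
  refine ⟨?_, fun m hm ↦ ?_, fun m hm ↦ ?_, fun m hm ↦ ?_⟩
  · rw [update_of_ne (by omega), hc.level_zero]
  · rcases (Nat.lt_succ_iff.1 hm).eq_or_lt with rfl | hm
    · simpa [update_of_ne] using hk
    · rw [update_of_ne (by omega : m + 1 ≠ n + 1), update_of_ne (by omega : m ≠ n + 1)]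
      exact hc.level_lt m hm
  · rcases hm.eq_or_lt with rfl | hm
    · simpa using mem_Rk_of_mem_Rkl hRkrec hk (hc.mem_Rk n le_rfl) hq
    · simpa [update_of_ne hm.ne] using hc.mem_Rk m (by omega)
  · rcases (Nat.lt_succ_iff.1 hm).eq_or_lt with rfl | hm
    · simpa [update_of_ne] using hq
    · rw [update_of_ne (by omega : m + 1 ≠ n + 1), update_of_ne (by omega : m ≠ n + 1),
        update_of_ne (by omega : m + 1 ≠ n + 1), update_of_ne (by omega : m ≠ n + 1)]
      exact hc.mem_Rkl m hm

theorem level_monotoneOn (hc : IsTubeChain Rk Rkl n l trip) : MonotoneOn l (Iic n) :=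
  monotoneOn_of_le_succ ordConnected_Iic fun m _ _ hm ↦ by
    simp only [Order.succ_eq_add_one, mem_Iic] at hm ⊢
    exact (hc.level_lt m hm).le

theorem alpha_antitoneOn (hTT : ∀ j, ∀ q ∈ Rk j, TubeTriple K 𝔾 ε₀ q)
    (hαle : ∀ (k l : ℕ) (p : R × ℝ × ℝ), l < k → TubeTriple K 𝔾 ε₀ p →
      ∀ q ∈ Rkl k l p, q.2.2 ≤ p.2.2)
    (hc : IsTubeChain Rk Rkl n l trip) : AntitoneOn (fun m ↦ (trip m).2.2) (Iic n) :=
  antitoneOn_of_succ_le ordConnected_Iic fun m _ _ hm ↦ by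
    simp only [Order.succ_eq_add_one, mem_Iic] at hm ⊢
    exact hαle _ _ _ (hc.level_lt m hm) (hTT _ _ (hc.mem_Rk m (by omega))) _ (hc.mem_Rkl m hm)

theorem weight_le_alpha (hTT : ∀ j, ∀ q ∈ Rk j, TubeTriple K 𝔾 ε₀ q)
    (hαle : ∀ (k l : ℕ) (p : R × ℝ × ℝ), l < k → TubeTriple K 𝔾 ε₀ p →
      ∀ q ∈ Rkl k l p, q.2.2 ≤ p.2.2)
    (hc : IsTubeChain Rk Rkl n l trip) {m : ℕ} (hm : m ≤ n) : (trip n).2.1 ≤ (trip m).2.2 :=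
  (hTT _ _ (hc.mem_Rk n le_rfl)).2.2.2.2.trans
    (hc.alpha_antitoneOn hTT hαle (mem_Iic.2 hm) (mem_Iic.2 le_rfl) hm)

theorem mem_Mkw_of_mem_last (hTT : ∀ j, ∀ q ∈ Rk j, TubeTriple K 𝔾 ε₀ q)
    (hc : IsTubeChain Rk Rkl n l trip) (hn : 1 ≤ n) {μ : ℝ} (hμ : 0 ≤ μ) {x : Y}
    (hx : x ∈ K (trip n).1) (hd : ∀ m < n, infDist x (K (trip m).1) ≤ μ * (trip m).2.2) :
    x ∈ Mkw K Rk Rkl (l n) μ (trip n).2.1 := by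
  have hT := hTT _ _ (hc.mem_Rk n le_rfl)
  refine mem_Mkw_iff.2 ⟨n, hn, l, trip, hc, rfl, fun m hm ↦ ?_, ?_, rfl⟩
  · rcases hm.lt_or_eq with hm | rfl
    · exact hd m hm
    · rw [infDist_zero_of_mem hx]; exact mul_nonneg hμ hT.2.2.2.1.le
  · rw [infDist_zero_of_mem hx]; exact mul_nonneg hμ hT.2.1.le

end IsTubeChain

theorem closedBall_subset_Mkw (hTT : ∀ j, ∀ q ∈ Rk j, TubeTriple K 𝔾 ε₀ q)
    (hαle : ∀ (k l : ℕ) (p : R × ℝ × ℝ), l < k → TubeTriple K 𝔾 ε₀ p →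
      ∀ q ∈ Rkl k l p, q.2.2 ≤ p.2.2)
    {k : ℕ} {lam ψ w : ℝ} (hψ : 0 ≤ ψ) {y : Y} (hy : y ∈ Mkw K Rk Rkl k lam w) :
    closedBall y (ψ * w) ⊆ Mkw K Rk Rkl k (lam + ψ) w := by
  obtain ⟨n, hn, l, trip, hc, hln, hd, hdn, rfl⟩ := mem_Mkw_iff.1 hy
  intro z hz
  have hzy : dist z y ≤ ψ * (trip n).2.1 := mem_closedBall.1 hz
  refine mem_Mkw_iff.2 ⟨n, hn, l, trip, hc, hln, fun m hm ↦ ?_, ?_, rfl⟩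
  · calc infDist z (K (trip m).1) ≤ infDist y (K (trip m).1) + dist z y :=
          infDist_le_infDist_add_dist
      _ ≤ lam * (trip m).2.2 + ψ * (trip m).2.2 :=
          add_le_add (hd m hm) (hzy.trans (by gcongr; exact hc.weight_le_alpha hTT hαle hm))
      _ = (lam + ψ) * (trip m).2.2 := by ring
  · linarith [infDist_le_infDist_add_dist (x := z) (y := y) (s := K (trip n).1)]

theorem mem_Mk_of_mem_child (hTT : ∀ j, ∀ q ∈ Rk j, TubeTriple K 𝔾 ε₀ q)
    (hRkrec : ∀ k : ℕ, 1 ≤ k → Rk k = ⋃ (l : ℕ) (_ : l < k), ⋃ p ∈ Rk l, Rkl k l p)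
    {rkl : ℕ → ℕ → ℝ}
    (hRkl5 : ∀ (k l : ℕ) (p : R × ℝ × ℝ), l < k → TubeTriple K 𝔾 ε₀ p →
      ∃ v : ℝ, 0 < v ∧ (p.1, v, rkl k l * p.2.1) ∈ Rkl k l p)
    {M k : ℕ} {l : ℕ → ℕ} {trip : ℕ → R × ℝ × ℝ} (hc : IsTubeChain Rk Rkl M l trip)
    (hlk : l M ≤ k) {q : R × ℝ × ℝ} (hq : q ∈ Rkl (k + 1) (l M) (trip M))
    {μ : ℝ} (hμ : 0 ≤ μ) {x : Y} (hx : x ∈ K q.1)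
    (hd : ∀ m ≤ M, infDist x (K (trip m).1) ≤ μ * (trip m).2.2) {j : ℕ} (hj : 1 ≤ j) :
    x ∈ Mk K Rk Rkl (k + j) μ := by
  have hc₁ := hc.snoc hRkrec (Nat.lt_succ_of_le hlk) hq
  have hqT : TubeTriple K 𝔾 ε₀ q := by simpa using hTT _ _ (hc₁.mem_Rk (M + 1) le_rfl)
  have hd₁ : ∀ m ≤ M + 1, infDist x (K (update trip (M + 1) q m).1) ≤
      μ * (update trip (M + 1) q m).2.2 := by
    intro m hm
    rcases hm.lt_or_eq with hm | rfl
    · rw [update_of_ne (by omega)]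
      exact hd m (by omega)
    · rw [update_self, infDist_zero_of_mem hx]
      exact mul_nonneg hμ hqT.2.2.2.1.le
  rcases hj.eq_or_lt with rfl | hj
  · refine ⟨q.2.1, hqT.2.1, ?_⟩
    simpa using hc₁.mem_Mkw_of_mem_last hTT (by omega) hμ (by simpa using hx)
      fun m hm ↦ hd₁ m hm.le
  · obtain ⟨v, hv, hq'⟩ := hRkl5 (k + j) (k + 1) q (by omega) hqT
    have hc₂ := hc₁.snoc hRkrec (k := k + j) (by simp; omega) (by simpa using hq')
    refine ⟨v, hv, ?_⟩
    simpa using hc₂.mem_Mkw_of_mem_last hTT (by omega) hμ (by simpa using hx) fun m hm ↦ by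
      rw [update_of_ne (by omega)]
      exact hd₁ m (by omega)

theorem rkl_succ_mul_weight_lt_of_cutoff (hTT : ∀ j, ∀ q ∈ Rk j, TubeTriple K 𝔾 ε₀ q)
    {rkl : ℕ → ℕ → ℝ}
    (hRkl2 : ∀ (k l : ℕ) (p : R × ℝ × ℝ), l < k → TubeTriple K 𝔾 ε₀ p →
      ∀ q ∈ Rkl k l p,
        q.2.2 = rkl k l * p.2.1 ∧ rkl k l * p.2.1 < p.2.2 / 10 ∧ q.2.1 < ε₀ / k)
    (hrklA : ∀ k : ℕ, 1 ≤ k → rkl (k + 1) k ≤ 1 / k)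
    (hrklB : ∀ l l' k : ℕ, 1 ≤ k → l < l' → l' ≤ k → rkl (k + 1) l ≤ rkl l' l / k)
    {n k : ℕ} {l : ℕ → ℕ} {trip : ℕ → R × ℝ × ℝ} (hc : IsTubeChain Rk Rkl n l trip)
    (hk : 1 ≤ k) (hln : l n = k) {M : ℕ} (hMn : M ≤ n) {ρ ψ δ ε : ℝ} (hρ : 0 < ρ) (hψ : 0 < ψ)
    (hδw : ψ * (trip n).2.1 < 2 * δ) (hMmax : M < n → ¬2 * δ ≤ ψ * (trip (M + 1)).2.2)
    (hεk : 20 / (ρ * ψ * k) < ε) :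
    10 / ρ * rkl (k + 1) (l M) * (trip M).2.1 < ε * δ := by
  have hwM := (hTT _ _ (hc.mem_Rk M hMn)).2.1
  obtain ⟨A, hA, hψA, hrA⟩ :
      ∃ A, 0 ≤ A ∧ ψ * A < 2 * δ ∧ rkl (k + 1) (l M) * (trip M).2.1 ≤ A / k := by
    rcases hMn.lt_or_eq with hMn | rfl
    · have hlt := hc.level_lt M hMn
      have hlk : l (M + 1) ≤ k :=
        hln ▸ hc.level_monotoneOn (mem_Iic.2 hMn) (mem_Iic.2 le_rfl) hMn
      have hα := (hRkl2 _ _ _ hlt (hTT _ _ (hc.mem_Rk M hMn.le)) _ (hc.mem_Rkl M hMn)).1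
      refine ⟨_, (hTT _ _ (hc.mem_Rk _ hMn)).2.2.2.1.le, not_le.1 (hMmax hMn), ?_⟩
      rw [hα, mul_div_right_comm]
      exact mul_le_mul_of_nonneg_right (hrklB _ _ k hk hlt hlk) hwM.le
    · refine ⟨_, hwM.le, hδw, ?_⟩
      calc rkl (k + 1) (l M) * (trip M).2.1 ≤ 1 / k * (trip M).2.1 :=
            mul_le_mul_of_nonneg_right (hln ▸ hrklA k hk) hwM.le
        _ = (trip M).2.1 / k := by ring
  have hk' : (0 : ℝ) < k := by exact_mod_cast hk
  calc 10 / ρ * rkl (k + 1) (l M) * (trip M).2.1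
        = 10 / ρ * (rkl (k + 1) (l M) * (trip M).2.1) := by ring
    _ ≤ 10 / ρ * (A / k) := by gcongr
    _ = 20 / (ρ * ψ * k) * (ψ * A / 2) := by field_simp; ring
    _ < ε * δ := mul_lt_mul'' hεk (by linarith) (by positivity) (by positivity)

end Chains

theorem statement19_general {Y R : Type*} [MetricSpace Y] [MetricSpace R]
    (K : R → Set Y) (hKne : ∀ r, (K r).Nonempty) (hKcpt : ∀ r, IsCompact (K r))
    (hKdist : ∀ r s, hausdorffDist (K r) (K s) ≤ dist r s)
    (ρ ε₀ : ℝ) (hρ : 0 < ρ)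
    (𝔾 : Set Y)
    (rkl : ℕ → ℕ → ℝ)
    -- the additional constraints on the constants `r_{k,l}`
    (hrklA : ∀ k : ℕ, 1 ≤ k → rkl (k + 1) k ≤ 1 / k)
    (hrklB : ∀ l l' k : ℕ, 1 ≤ k → l < l' → l' ≤ k → rkl (k + 1) l ≤ rkl l' l / k)
    (p₀ : R × ℝ × ℝ) (hp₀ : TubeTriple K 𝔾 ε₀ p₀)
    (Rkl : ℕ → ℕ → (R × ℝ × ℝ) → Set (R × ℝ × ℝ))
    (hRklT : ∀ (k l : ℕ) (p : R × ℝ × ℝ), l < k → TubeTriple K 𝔾 ε₀ p →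
      ∀ q ∈ Rkl k l p, TubeTriple K 𝔾 ε₀ q)
    -- property (1)
    (hRkl1 : ∀ (k l : ℕ) (p : R × ℝ × ℝ), l < k → TubeTriple K 𝔾 ε₀ p →
      ∀ s : R, K s ⊆ cthickening p.2.2 (K p.1) →
        ∃ q ∈ Rkl k l p, dist q.1 s ≤ (10 / ρ) * rkl k l * p.2.1)
    -- property (2)
    (hRkl2 : ∀ (k l : ℕ) (p : R × ℝ × ℝ), l < k → TubeTriple K 𝔾 ε₀ p →
      ∀ q ∈ Rkl k l p,
        q.2.2 = rkl k l * p.2.1 ∧ rkl k l * p.2.1 < p.2.2 / 10 ∧ q.2.1 < ε₀ / k)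
    -- property (5)
    (hRkl5 : ∀ (k l : ℕ) (p : R × ℝ × ℝ), l < k → TubeTriple K 𝔾 ε₀ p →
      ∃ v : ℝ, 0 < v ∧ (p.1, v, rkl k l * p.2.1) ∈ Rkl k l p)
    (Rk : ℕ → Set (R × ℝ × ℝ))
    (hRk0 : Rk 0 = {p₀})
    (hRkrec : ∀ k : ℕ, 1 ≤ k →
      Rk k = ⋃ (l : ℕ) (_ : l < k), ⋃ p ∈ Rk l, Rkl k l p)
    (k : ℕ) (hk : 1 ≤ k) (lam ψ w ε : ℝ)
    (hlam : 0 ≤ lam) (hψ : 0 < ψ) (hlamψ : lam + ψ ≤ 1) (hw : 0 < w)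
    (hε1 : ε < 1)
    (y : Y) (hy : y ∈ Mkw K Rk Rkl k lam w) :
    -- (1)
    closedBall y (ψ * w) ⊆ Mkw K Rk Rkl k (lam + ψ) w ∧
    -- (2)
    ∀ δ : ℝ, ψ * w < 2 * δ → 2 * δ < ψ * p₀.2.2 → 20 / (ρ * ψ * k) < ε →
      ∀ s : R, K s ⊆ closedBall y δ →
        ∃ t : R, dist t s < ε * δ ∧
          ∀ j : ℕ, 1 ≤ j → K t ⊆ Mk K Rk Rkl (k + j) (lam + ψ) := by
  have hTT := tubeTriple_of_mem_Rk hp₀ hRklT hRk0 hRkrec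
  have hαle : ∀ (k l : ℕ) (p : R × ℝ × ℝ), l < k → TubeTriple K 𝔾 ε₀ p →
      ∀ q ∈ Rkl k l p, q.2.2 ≤ p.2.2 := fun k l p hlk hp q hq ↦ by
    linarith [hp.2.2.2.1, (hRkl2 k l p hlk hp q hq).1, (hRkl2 k l p hlk hp q hq).2.1]
  refine ⟨closedBall_subset_Mkw hTT hαle hψ.le hy, ?_⟩
  intro δ hδw hδα hεk s hs
  obtain ⟨n, -, l, trip, hc, hln, hd, -, rfl⟩ := mem_Mkw_iff.1 hy
  have htrip0 : trip 0 = p₀ := by simpa [hc.level_zero, hRk0] using hc.mem_Rk 0 (Nat.zero_le n)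
  obtain ⟨M, hMn, hαM, hMmax⟩ := exists_greatest_le_of_zero
    (P := fun m ↦ 2 * δ ≤ ψ * (trip m).2.2) n (by simpa [htrip0] using hδα.le)
  have hTM := hTT _ _ (hc.mem_Rk M hMn)
  have hlM : l M ≤ k := hln ▸ hc.level_monotoneOn (mem_Iic.2 hMn) (mem_Iic.2 le_rfl) hMn
  have hsM : K s ⊆ cthickening (trip M).2.2 (K (trip M).1) :=
    hs.trans <| closedBall_subset_cthickening_of_infDist_add_le (hKne _) <| by
      nlinarith [hd M hMn, hTM.2.2.2.1]
  obtain ⟨q, hq, hqs⟩ := hRkl1 (k + 1) (l M) (trip M) (by omega) hTM s hsM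
  have hqs' : dist q.1 s < ε * δ := hqs.trans_lt <| rkl_succ_mul_weight_lt_of_cutoff hTT hRkl2 hrklA hrklB
    hc hk hln hMn hρ hψ hδw hMmax hεk
  have hKqs : hausdorffDist (K q.1) (K s) < δ := (hKdist _ _).trans_lt <|
    hqs'.trans_le (mul_le_of_le_one_left (by linarith [mul_pos hψ hw]) hε1.le)
  refine ⟨q.1, hqs', fun j hj x hx ↦ mem_Mk_of_mem_child hTT hRkrec hRkl5 (hc.of_le hMn) hlM hq
    (by linarith) hx (fun m hm ↦ ?_) hj⟩
  have hxy := infDist_le_of_mem_of_hausdorffDist_lt (u := K (trip m).1)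
    (hausdorffEDist_ne_top_of_nonempty_of_bounded (hKne _) (hKne _) (hKcpt _).isBounded
      (hKcpt _).isBounded) hx hKqs hs
  nlinarith [hd m (hm.trans hMn),
    hc.alpha_antitoneOn hTT hαle (mem_Iic.2 (hm.trans hMn)) (mem_Iic.2 hMn) hm]

/-- Lemma 6.6 of the paper: the key approximation property of the sets
`M_k(λ,w)`. -/
theorem statement19 {Y R : Type*} [MetricSpace Y] [MetricSpace R]
    (K : R → Set Y) (hKne : ∀ r, (K r).Nonempty) (hKcpt : ∀ r, IsCompact (K r))
    (hKdist : ∀ r s, hausdorffDist (K r) (K s) ≤ dist r s)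
    (ρ ε₀ : ℝ) (hρ : 0 < ρ) (hρ1 : ρ < 1) (hε₀ : 0 < ε₀)
    (G : ℕ → Set Y) (hGopen : ∀ k : ℕ, 1 ≤ k → IsOpen (G k))
    (hGnested : ∀ k : ℕ, 1 ≤ k → G (k + 1) ⊆ G k)
    (𝔾 : Set Y) (h𝔾 : 𝔾 = ⋂ (k : ℕ) (_ : 1 ≤ k), G k)
    (rkl : ℕ → ℕ → ℝ)
    (hrkl : ∀ k l : ℕ, l < k → 0 < rkl k l ∧ rkl k l < ρ / 10)
    -- the additional constraints on the constants `r_{k,l}`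
    (hrklA : ∀ k : ℕ, 1 ≤ k → rkl (k + 1) k ≤ 1 / k)
    (hrklB : ∀ l l' k : ℕ, 1 ≤ k → l < l' → l' ≤ k → rkl (k + 1) l ≤ rkl l' l / k)
    (p₀ : R × ℝ × ℝ) (hp₀ : TubeTriple K 𝔾 ε₀ p₀)
    (Rkl : ℕ → ℕ → (R × ℝ × ℝ) → Set (R × ℝ × ℝ))
    (hRklT : ∀ (k l : ℕ) (p : R × ℝ × ℝ), l < k → TubeTriple K 𝔾 ε₀ p →
      ∀ q ∈ Rkl k l p, TubeTriple K 𝔾 ε₀ q)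
    -- property (1)
    (hRkl1 : ∀ (k l : ℕ) (p : R × ℝ × ℝ), l < k → TubeTriple K 𝔾 ε₀ p →
      ∀ s : R, K s ⊆ cthickening p.2.2 (K p.1) →
        ∃ q ∈ Rkl k l p, dist q.1 s ≤ (10 / ρ) * rkl k l * p.2.1)
    -- property (2)
    (hRkl2 : ∀ (k l : ℕ) (p : R × ℝ × ℝ), l < k → TubeTriple K 𝔾 ε₀ p →
      ∀ q ∈ Rkl k l p,
        q.2.2 = rkl k l * p.2.1 ∧ rkl k l * p.2.1 < p.2.2 / 10 ∧ q.2.1 < ε₀ / k)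
    -- property (3)
    (hRkl3 : ∀ (k l : ℕ) (p : R × ℝ × ℝ), l < k → TubeTriple K 𝔾 ε₀ p →
      ∀ q ∈ Rkl k l p,
        cthickening q.2.1 (K q.1) ⊆ G k ∧ K q.1 ⊆ cthickening (2 * p.2.2) (K p.1))
    -- property (4)
    (hRkl4 : ∀ (k l : ℕ) (p : R × ℝ × ℝ), l < k → TubeTriple K 𝔾 ε₀ p →
      ∀ B : Set Y, Metric.diam B ≤ 8 * rkl k l * p.2.1 →
        {q ∈ Rkl k l p | (K q.1 ∩ B).Nonempty}.Finite)
    -- property (5)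
    (hRkl5 : ∀ (k l : ℕ) (p : R × ℝ × ℝ), l < k → TubeTriple K 𝔾 ε₀ p →
      ∃ v : ℝ, 0 < v ∧ (p.1, v, rkl k l * p.2.1) ∈ Rkl k l p)
    (Rk : ℕ → Set (R × ℝ × ℝ))
    (hRk0 : Rk 0 = {p₀})
    (hRkrec : ∀ k : ℕ, 1 ≤ k →
      Rk k = ⋃ (l : ℕ) (_ : l < k), ⋃ p ∈ Rk l, Rkl k l p)
    (k : ℕ) (hk : 1 ≤ k) (lam ψ w ε : ℝ)
    (hlam : 0 ≤ lam) (hψ : 0 < ψ) (hlamψ : lam + ψ ≤ 1) (hw : 0 < w)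
    (hε : 0 < ε) (hε1 : ε < 1)
    (y : Y) (hy : y ∈ Mkw K Rk Rkl k lam w) :
    -- (1)
    closedBall y (ψ * w) ⊆ Mkw K Rk Rkl k (lam + ψ) w ∧
    -- (2)
    ∀ δ : ℝ, ψ * w < 2 * δ → 2 * δ < ψ * p₀.2.2 → 20 / (ρ * ψ * k) < ε →
      ∀ s : R, K s ⊆ closedBall y δ →
        ∃ t : R, dist t s < ε * δ ∧
          ∀ j : ℕ, 1 ≤ j → K t ⊆ Mk K Rk Rkl (k + j) (lam + ψ) :=
  statement19_general K hKne hKcpt hKdist ρ ε₀ hρ 𝔾 rkl hrklA hrklB p₀ hp₀ Rkl hRklT hRkl1 hRkl2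
    hRkl5 Rk hRk0 hRkrec k hk lam ψ w ε hlam hψ hlamψ hw hε1 y hy
end
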